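/- arXiv:2605.05117 — 10 statements merged into one kernel-verified Lean document; each statement's English description precedes it below -/
import Mathlib

section
/- Let G be a finite abelian group of order n and let g : {1,…,n} → G be any sequence over G of length n. Then the labelled determinant coefficient satisfies c̃_G(S) = ∑_θ ∏_{i=1}^n θ(i)(g_i), where the sum runs over all bijections θ from {1,…,n} to the group Ĝ of complex characters of G (and the equality holds in ℂ). -/
open MvPolynomial Finset
private lemma prod_X_monomial {σ J : Type*} (s : Finset J) (f : J → σ) :
    (∏ j ∈ s, (X (f j) : MvPolynomial σ ℂ)) =
      monomial (∑ j ∈ s, Finsupp.single (f j) 1) 1 := by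
  induction s using Finset.cons_induction with
  | empty => simp [monomial_zero']
  | cons a s ha ih => rw [Finset.prod_cons, Finset.sum_cons, ih, X, monomial_mul, one_mul]

/-- bijections matching fibers correspond to families of fiber bijections -/
private def fiberEquiv {I J G : Type*} (g : I → G) (f : J → G) :
    {θ : I ≃ J // ∀ i, f (θ i) = g i} ≃ ∀ h : G, {i // g i = h} ≃ {j // f j = h} where
  toFun θ h := Equiv.subtypeEquiv θ.1 (fun i => by rw [← θ.2 i])
  invFun σ := ⟨(Equiv.sigmaFiberEquiv g).symm.trans
      ((Equiv.sigmaCongrRight σ).trans (Equiv.sigmaFiberEquiv f)),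
    fun i => (σ (g i) ⟨i, rfl⟩).2⟩
  left_inv θ := by apply Subtype.ext; ext i; rfl
  right_inv σ := by
    funext h; ext ⟨i, hi⟩
    show ((σ (g i) ⟨i, rfl⟩ : {j // f j = g i}) : J) = ((σ h ⟨i, hi⟩ : {j // f j = h}) : J)
    subst hi; rfl

private lemma card_fiber_match {I J G : Type*} [Fintype I] [Fintype J] [Fintype G]
    [DecidableEq I] [DecidableEq J] [DecidableEq G] (g : I → G) (f : J → G) :
    Fintype.card {θ : I ≃ J // ∀ i, f (θ i) = g i} =
      if (∀ h : G, (univ.filter fun j => f j = h).card = (univ.filter fun i => g i = h).card)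
      then ∏ h : G, ((univ.filter fun i : I => g i = h).card).factorial else 0 := by
  classical
  rw [Fintype.card_congr (fiberEquiv g f), Fintype.card_pi]
  split_ifs with H
  · refine Finset.prod_congr rfl fun h _ => ?_
    have hc : Fintype.card {i // g i = h} = Fintype.card {j // f j = h} := by
      rw [Fintype.card_subtype, Fintype.card_subtype, H h]
    rw [Fintype.card_equiv (Fintype.equivOfCardEq hc), Fintype.card_subtype]
  · push_neg at H
    obtain ⟨h, hh⟩ := H
    refine Finset.prod_eq_zero (Finset.mem_univ h) ?_
    rw [Fintype.card_eq_zero_iff]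
    exact ⟨fun e => hh (by
      rw [← Fintype.card_subtype, ← Fintype.card_subtype, Fintype.card_congr e])⟩

/-- Coefficient extraction: labelled coefficient of a product of linear forms. -/
private lemma coeff_prod_linear {J G : Type*} [Fintype J] [DecidableEq J] [Fintype G] [DecidableEq G]
    {n : ℕ} (c : J → G → ℂ) (g : Fin n → G) :
    (∏ h : G, (((univ.filter fun i : Fin n => g i = h).card).factorial : ℂ)) *
      MvPolynomial.coeff
        (Finsupp.equivFunOnFinite.symm fun h : G => (univ.filter fun i : Fin n => g i = h).card)
        (∏ j : J, ∑ a : G, MvPolynomial.C (c j a) * X a) =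
    ∑ θ : Fin n ≃ J, ∏ i : Fin n, c (θ i) (g i) := by
  classical
  set α : G →₀ ℕ :=
    Finsupp.equivFunOnFinite.symm fun h : G => (univ.filter fun i : Fin n => g i = h).card with hα
  -- expand the product of sums
  have expand : (∏ j : J, ∑ a : G, MvPolynomial.C (c j a) * X a) =
      ∑ f : J → G, MvPolynomial.C (∏ j, c j (f j)) *
        monomial (∑ j, Finsupp.single (f j) 1) (1 : ℂ) := by
    rw [Finset.prod_univ_sum]
    rw [Fintype.piFinset_univ]
    refine Finset.sum_congr rfl fun f _ => ?_
    rw [Finset.prod_mul_distrib, map_prod, prod_X_monomial]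
  rw [expand, coeff_sum, Finset.mul_sum]
  -- condition: exponent matches iff fiber cardinalities match
  have hcond : ∀ f : J → G, ((∑ j, Finsupp.single (f j) 1) = α) ↔
      (∀ h : G, (univ.filter fun j => f j = h).card = (univ.filter fun i => g i = h).card) := by
    intro f
    rw [Finsupp.ext_iff]
    refine forall_congr' fun h => ?_
    have h1 : (∑ j, Finsupp.single (f j) (1 : ℕ)) h = (univ.filter fun j => f j = h).card := by
      rw [Finsupp.finset_sum_apply, Finset.card_filter]
      exact Finset.sum_congr rfl fun j _ => Finsupp.single_apply
    have h2 : α h = (univ.filter fun i : Fin n => g i = h).card := rfl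
    rw [h1, h2]
  -- RHS: group bijections by induced function J → G
  have hRHS : (∑ θ : Fin n ≃ J, ∏ i : Fin n, c (θ i) (g i)) =
      ∑ f : J → G, (Fintype.card {θ : Fin n ≃ J // ∀ i, f (θ i) = g i} : ℂ) *
        ∏ j, c j (f j) := by
    rw [← Finset.sum_fiberwise univ (fun θ : Fin n ≃ J => fun j => g (θ.symm j))
      (fun θ => ∏ i : Fin n, c (θ i) (g i))]
    refine Finset.sum_congr rfl fun f _ => ?_
    have key : ∀ θ : Fin n ≃ J, θ ∈ univ.filter (fun θ : Fin n ≃ J =>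
        (fun j => g (θ.symm j)) = f) → (∏ i : Fin n, c (θ i) (g i)) = ∏ j, c j (f j) := by
      intro θ hθ
      rw [Finset.mem_filter] at hθ
      have hθ' := hθ.2
      calc ∏ i : Fin n, c (θ i) (g i)
          = ∏ i : Fin n, c (θ i) (g (θ.symm (θ i))) := by
            refine Finset.prod_congr rfl fun i _ => by simp
        _ = ∏ j, c j (g (θ.symm j)) := Fintype.prod_equiv θ _ _ (fun i => by simp)
        _ = ∏ j, c j (f j) := by
            refine Finset.prod_congr rfl fun j _ => by rw [congr_fun hθ' j]
    rw [Finset.sum_congr rfl key, Finset.sum_const, nsmul_eq_mul]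
    congr 2
    rw [Fintype.card_subtype]
    congr 1
    apply Finset.filter_congr
    intro θ _
    constructor
    · intro hθ i
      rw [← congr_fun hθ (θ i), Equiv.symm_apply_apply]
    · intro hθ
      funext j
      rw [← hθ (θ.symm j), Equiv.apply_symm_apply]
  rw [hRHS]
  refine Finset.sum_congr rfl fun f _ => ?_
  rw [coeff_C_mul, coeff_monomial]
  have hN : (Fintype.card {θ : Fin n ≃ J // ∀ i, f (θ i) = g i}) =
      if (∀ h : G, (univ.filter fun j => f j = h).card = (univ.filter fun i => g i = h).card)
      then ∏ h : G, ((univ.filter fun i : Fin n => g i = h).card).factorial else 0 := by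
    convert card_fiber_match g f using 2
  rw [hN]
  by_cases hf : (∑ j, Finsupp.single (f j) 1) = α
  · rw [if_pos hf, if_pos ((hcond f).1 hf)]
    push_cast
    ring
  · rw [if_neg hf, if_neg (fun H => hf ((hcond f).2 H))]
    simp

private lemma det_group_matrix {G : Type*} [AddCommGroup G] [Fintype G] [DecidableEq G] :
    (Matrix.of fun a b : G => (X (a - b) : MvPolynomial G ℂ)).det =
      ∏ χ : AddChar G ℂ, ∑ a : G, MvPolynomial.C (χ a) * X a := by
  classical
  have hcard : Fintype.card G = Fintype.card (AddChar G ℂ) := AddChar.card_eq.symm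
  set e : G ≃ AddChar G ℂ := Fintype.equivOfCardEq hcard with he
  set V₀ : Matrix G G ℂ := Matrix.of fun a b => e b a with hV₀
  set V : Matrix G G (MvPolynomial G ℂ) := V₀.map MvPolynomial.C with hVdef
  set d : G → MvPolynomial G ℂ := fun b => ∑ a : G, MvPolynomial.C (e b (-a)) * X a with hd
  have key : (Matrix.of fun a b : G => (X (a - b) : MvPolynomial G ℂ)) * V
      = V * Matrix.diagonal d := by
    refine Matrix.ext fun a b => ?_
    rw [Matrix.mul_apply, Matrix.mul_diagonal]
    have h1 : (V a b * d b) = ∑ c : G, MvPolynomial.C (e b (a - c)) * X c := by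
      show MvPolynomial.C (e b a) * (∑ c : G, MvPolynomial.C (e b (-c)) * X c) = _
      rw [Finset.mul_sum]
      refine Finset.sum_congr rfl fun c _ => ?_
      rw [← mul_assoc]
      rw [← MvPolynomial.C_mul]
      have hx : (e b) a * (e b) (-c) = (e b) (a - c) := by
        rw [← AddChar.map_add_eq_mul, ← sub_eq_add_neg]
      rw [hx]
    rw [h1]
    refine Fintype.sum_equiv (Equiv.subLeft a)
      (fun j => (Matrix.of fun a b : G => (X (a - b) : MvPolynomial G ℂ)) a j * V j b)
      (fun c => MvPolynomial.C (e b (a - c)) * X c) fun c => ?_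
    show (X (a - c) : MvPolynomial G ℂ) * MvPolynomial.C (e b c)
        = MvPolynomial.C (e b (a - (a - c))) * X (a - c)
    rw [sub_sub_cancel, mul_comm]
  have hdet := congrArg Matrix.det key
  rw [Matrix.det_mul, Matrix.det_mul] at hdet
  have hV : V.det = MvPolynomial.C V₀.det := (RingHom.map_det MvPolynomial.C V₀).symm
  have hW : (Matrix.of fun b a : G => (e b) (-a)) * V₀ =
      Matrix.diagonal fun _ : G => (Fintype.card G : ℂ) := by
    ext b b'
    rw [Matrix.mul_apply, Matrix.diagonal_apply]
    have h2 : ∀ a : G, (Matrix.of fun b a : G => (e b) (-a)) b a * V₀ a b'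
        = (e b' - e b) a := by
      intro a
      show (e b) (-a) * (e b') a = _
      rw [AddChar.sub_apply, mul_comm]
    rw [Finset.sum_congr rfl fun a _ => h2 a]
    have h3 : (∑ a : G, (e b' - e b) a) = if e b' - e b = 0 then (Fintype.card G : ℂ) else 0 :=
      AddChar.sum_eq_ite _
    rw [h3]
    congr 1
    rw [eq_iff_iff, sub_eq_zero, e.symm.injective.eq_iff.symm]
    constructor <;> intro h
    · rw [e.symm_apply_apply, e.symm_apply_apply] at h; exact h.symm
    · rw [h]
  have hdetV₀ : V₀.det ≠ 0 := by
    intro h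
    have h4 := congrArg Matrix.det hW
    rw [Matrix.det_mul, h, mul_zero, Matrix.det_diagonal, Finset.prod_const] at h4
    exact (pow_ne_zero _ (Nat.cast_ne_zero.mpr Fintype.card_ne_zero)) h4.symm
  have hC : (MvPolynomial.C V₀.det : MvPolynomial G ℂ) ≠ 0 := fun h =>
    hdetV₀ (by rwa [MvPolynomial.C_eq_zero] at h)
  rw [hV] at hdet
  have hM : (Matrix.of fun a b : G => (X (a - b) : MvPolynomial G ℂ)).det
      = (Matrix.diagonal d).det := by
    apply mul_left_cancel₀ hC
    rw [mul_comm (MvPolynomial.C V₀.det), hdet]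
  rw [hM, Matrix.det_diagonal]
  calc ∏ b : G, d b
      = ∏ χ : AddChar G ℂ, ∑ a : G, MvPolynomial.C (χ (-a)) * X a :=
        Fintype.prod_equiv e _ _ fun b => rfl
    _ = ∏ χ : AddChar G ℂ, ∑ a : G, MvPolynomial.C (χ a) * X a :=
        Fintype.prod_equiv (Equiv.neg (AddChar G ℂ)) _ _ fun χ => by simp

/-- **Character-bijection formula for the labelled determinant coefficient.**
For a sequence `g : Fin n → G` of length `n = |G|`,
`c̃_G(S) = ∑_θ ∏_i θ(i)(g i)` in `ℂ`, where the sum runs over all bijections `θ` from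
`{1,…,n}` to the group `Ĝ` of complex characters of `G`. -/
theorem stmt_3 {G : Type*} [AddCommGroup G] [Fintype G] [DecidableEq G]
    (n : ℕ) (hn : Fintype.card G = n) (g : Fin n → G) :
    ((∏ h : G, (Nat.factorial (Finset.univ.filter fun i : Fin n => g i = h).card : ℤ)) *
        MvPolynomial.coeff
          (Finsupp.equivFunOnFinite.symm
            fun h : G => (Finset.univ.filter fun i : Fin n => g i = h).card)
          (Matrix.det (Matrix.of fun a b : G => (X (a - b) : MvPolynomial G ℤ))) : ℂ) =
    ∑ θ : Fin n ≃ AddChar G ℂ, ∏ i : Fin n, θ i (g i) := by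
  classical
  have hmap : (MvPolynomial.map (Int.castRingHom ℂ))
      ((Matrix.of fun a b : G => (X (a - b) : MvPolynomial G ℤ)).det) =
      (Matrix.of fun a b : G => (X (a - b) : MvPolynomial G ℂ)).det := by
    rw [RingHom.map_det]
    congr 1
    ext a b
    simp
  have key := coeff_prod_linear (J := AddChar G ℂ) (fun χ a => χ a) g
  rw [← det_group_matrix (G := G), ← hmap, coeff_map] at key
  rw [← key]
  push_cast
  rfl
end

section
/- Let p be a prime, r ≥ 1, and n = p^r. Let k ≥ 2 and let b_1,…,b_k ≥ 1 be integers with b_1 + ⋯ + b_k = n. Then v_p((n−1)!) < (k−1)·r + ∑_{j=1}^k v_p((b_j−1)!), where v_p denotes the p-adic valuation. Equivalently, the integer (n−1)!/(∏_{j=1}^k (b_j−1)!) has p-adic valuation strictly less than (k−1)·r. -/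
/-- Digit sum of `m < p^r` is at most `r*(p-1)`. -/
lemma digitsum_le (p : ℕ) (hp : 2 ≤ p) : ∀ r m : ℕ, m < p ^ r →
    (p.digits m).sum ≤ r * (p - 1) := by
  intro r
  induction r with
  | zero =>
    intro m hm
    rw [pow_zero] at hm
    have : m = 0 := by omega
    simp [this]
  | succ r ih =>
    intro m hm
    rcases Nat.eq_zero_or_pos m with h0 | h0
    · simp [h0]
    rw [Nat.digits_def' (by omega : 1 < p) h0]
    simp only [List.sum_cons]
    have h1 : m % p ≤ p - 1 := by
      have := Nat.mod_lt m (by omega : 0 < p); omega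
    have h2 : m / p < p ^ r := by
      rw [Nat.div_lt_iff_lt_mul (by omega : 0 < p)]
      calc m < p ^ (r + 1) := hm
        _ = p ^ r * p := by ring
    have := ih (m / p) h2
    calc m % p + (p.digits (m / p)).sum ≤ (p - 1) + r * (p - 1) := by omega
      _ = (r + 1) * (p - 1) := by ring
/-- Digit sum of `m ≤ p^r - 2` (with `r ≥ 1`) is strictly less than `r*(p-1)`. -/
lemma digitsum_lt (p : ℕ) (hp : 2 ≤ p) : ∀ r : ℕ, 1 ≤ r → ∀ m : ℕ, m + 2 ≤ p ^ r →
    (p.digits m).sum < r * (p - 1) := by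
  intro r
  induction r with
  | zero => omega
  | succ r ih =>
    intro _ m hm
    rcases Nat.eq_zero_or_pos r with hr0 | hr0
    · -- r = 0 : m ≤ p - 2 < p, digit sum = m
      subst hr0
      rw [zero_add, pow_one] at hm
      rcases Nat.eq_zero_or_pos m with h0 | h0
      · subst h0
        simp only [Nat.digits_zero, List.sum_nil]
        have : (0 + 1) * (p - 1) = p - 1 := by ring
        omega
      · rw [Nat.digits_def' (by omega : 1 < p) h0]
        have hd : m / p = 0 := Nat.div_eq_of_lt (by omega)
        rw [hd]
        simp only [Nat.digits_zero, List.sum_cons, List.sum_nil]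
        have : m % p = m := Nat.mod_eq_of_lt (by omega)
        omega
    rcases Nat.eq_zero_or_pos m with h0 | h0
    · have hpos : 0 < (r + 1) * (p - 1) := Nat.mul_pos (by omega) (by omega)
      simpa [h0] using hpos
    rw [Nat.digits_def' (by omega : 1 < p) h0]
    simp only [List.sum_cons]
    have hmod : m % p ≤ p - 1 := by
      have := Nat.mod_lt m (by omega : 0 < p); omega
    have hdiv : m / p < p ^ r := by
      rw [Nat.div_lt_iff_lt_mul (by omega : 0 < p)]
      have : p ^ r * p = p ^ (r + 1) := by ring
      omega
    by_cases hc : m % p = p - 1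
    · -- then m / p + 2 ≤ p ^ r
      have hmp : p * (m / p) + (p - 1) = m := by
        have := Nat.div_add_mod m p; omega
      have hd2 : m / p + 2 ≤ p ^ r := by
        have hm1 : m + 1 = p * (m / p + 1) := by
          rw [Nat.mul_add, Nat.mul_one]; omega
        have hlt : p * (m / p + 1) < p * p ^ r := by
          have hpp : p ^ (r + 1) = p * p ^ r := by ring
          omega
        have := Nat.lt_of_mul_lt_mul_left hlt
        omega
      have := ih hr0 (m / p) hd2
      calc m % p + (p.digits (m / p)).sum < (p - 1) + r * (p - 1) := by omega
        _ = (r + 1) * (p - 1) := by ring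
    · have := digitsum_le p hp r (m / p) hdiv
      calc m % p + (p.digits (m / p)).sum ≤ (p - 2) + r * (p - 1) := by omega
        _ < (r + 1) * (p - 1) := by
          have : (r + 1) * (p - 1) = r * (p - 1) + (p - 1) := by ring
          omega

/-- Digit sum of `p^r - 1` equals `r * (p - 1)`. -/
lemma digitsum_pow_sub_one (p : ℕ) (hp : 2 ≤ p) : ∀ r : ℕ,
    (p.digits (p ^ r - 1)).sum = r * (p - 1) := by
  intro r
  induction r with
  | zero => simp
  | succ r ih =>
    have h2p : 1 < p ^ (r + 1) := Nat.one_lt_pow (Nat.succ_ne_zero r) (by omega)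
    have hpos : 0 < p ^ (r + 1) - 1 := by omega
    rw [Nat.digits_def' (by omega : 1 < p) hpos]
    have h1 : p ^ (r + 1) = p * p ^ r := by ring
    have hp1 : 1 ≤ p ^ r := Nat.one_le_pow _ _ (by omega)
    have h2 : p * (p ^ r - 1) = p * p ^ r - p * 1 := Nat.mul_sub p _ _
    have h4 : p * 1 ≤ p * p ^ r := Nat.mul_le_mul_left p hp1
    have hkey : p ^ (r + 1) - 1 = p * (p ^ r - 1) + (p - 1) := by omega
    have hmod : (p ^ (r + 1) - 1) % p = p - 1 := by
      rw [hkey, Nat.mul_add_mod]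
      exact Nat.mod_eq_of_lt (by omega)
    have hdiv : (p ^ (r + 1) - 1) / p = p ^ r - 1 := by
      rw [hkey, Nat.mul_add_div (by omega : 0 < p), Nat.div_eq_of_lt (by omega)]
      omega
    rw [hmod, hdiv, List.sum_cons, ih]
    ring

/-- **p-adic valuation inequality.** If `n = p ^ r` with `p` prime and `r ≥ 1`, and
`b₁ + ⋯ + b_k = n` with `k ≥ 2` and each `b_j ≥ 1`, then
`v_p((n−1)!) < (k−1)·r + ∑_j v_p((b_j−1)!)`. -/
theorem stmt_4 (p r : ℕ) (hp : p.Prime) (hr : 1 ≤ r) (k : ℕ) (hk : 2 ≤ k)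
    (b : Fin k → ℕ) (hb : ∀ j, 1 ≤ b j) (hsum : ∑ j, b j = p ^ r) :
    padicValNat p (Nat.factorial (p ^ r - 1)) <
      (k - 1) * r + ∑ j, padicValNat p (Nat.factorial (b j - 1)) := by
  haveI : Fact p.Prime := ⟨hp⟩
  have hp2 : 2 ≤ p := hp.two_le
  -- Legendre for (p^r - 1)!
  have hA : (p - 1) * padicValNat p (Nat.factorial (p ^ r - 1)) + r * (p - 1) + 1 = p ^ r := by
    have h1 := sub_one_mul_padicValNat_factorial (p := p) (p ^ r - 1)
    rw [digitsum_pow_sub_one p hp2 r] at h1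
    have hle : r * (p - 1) ≤ p ^ r - 1 := by
      have := digitsum_pow_sub_one p hp2 r
      have := Nat.digit_sum_le p (p ^ r - 1)
      omega
    have hp1 : 1 ≤ p ^ r := Nat.one_le_pow _ _ (by omega)
    omega
  -- per-part facts
  have hBj : ∀ j, (p - 1) * padicValNat p (Nat.factorial (b j - 1))
      + (p.digits (b j - 1)).sum + 1 = b j := by
    intro j
    have h1 := sub_one_mul_padicValNat_factorial (p := p) (b j - 1)
    have h2 := Nat.digit_sum_le p (b j - 1)
    have := hb j
    omega
  have hbub : ∀ j, b j + 1 ≤ p ^ r := by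
    intro j
    have hmem : j ∈ (Finset.univ : Finset (Fin k)) := Finset.mem_univ j
    have := Finset.add_sum_erase Finset.univ b hmem
    have hcard : (Finset.univ.erase j).card = k - 1 := by
      rw [Finset.card_erase_of_mem hmem, Finset.card_univ, Fintype.card_fin]
    have hpos : 1 ≤ ∑ i ∈ Finset.univ.erase j, b i := by
      calc 1 ≤ k - 1 := by omega
        _ = ∑ i ∈ Finset.univ.erase j, (1 : ℕ) := by
          rw [Finset.sum_const, hcard, smul_eq_mul, mul_one]
        _ ≤ _ := Finset.sum_le_sum (fun i _ => hb i)
    omega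
  have hSj : ∀ j, (p.digits (b j - 1)).sum < r * (p - 1) := by
    intro j
    apply digitsum_lt p hp2 r hr
    have := hbub j
    have := hb j
    omega
  -- sum the per-part equalities
  have hB : (p - 1) * (∑ j, padicValNat p (Nat.factorial (b j - 1)))
      + (∑ j, (p.digits (b j - 1)).sum) + k = p ^ r := by
    have := Finset.sum_congr rfl (fun j (_ : j ∈ Finset.univ) => (hBj j))
    rw [Finset.sum_add_distrib, Finset.sum_add_distrib, ← Finset.mul_sum] at this
    simpa [hsum, Finset.card_univ] using this
  have hC : (∑ j, (p.digits (b j - 1)).sum) + k ≤ k * (r * (p - 1)) := by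
    calc (∑ j, (p.digits (b j - 1)).sum) + k
        = ∑ j, ((p.digits (b j - 1)).sum + 1) := by
          rw [Finset.sum_add_distrib]; simp [Finset.card_univ]
      _ ≤ ∑ _j : Fin k, r * (p - 1) := Finset.sum_le_sum (fun j _ => hSj j)
      _ = k * (r * (p - 1)) := by simp [Finset.card_univ, mul_comm]
  -- combine
  apply Nat.lt_of_mul_lt_mul_left (a := p - 1)
  have hD : (p - 1) * ((k - 1) * r + ∑ j, padicValNat p (Nat.factorial (b j - 1)))
      = (p - 1) * ((k - 1) * r) + (p - 1) * ∑ j, padicValNat p (Nat.factorial (b j - 1)) := by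
    ring
  rw [hD]
  have hE : (p - 1) * ((k - 1) * r) + r * (p - 1) = k * (r * (p - 1)) := by
    have h1 : k - 1 + 1 = k := by omega
    calc (p - 1) * ((k - 1) * r) + r * (p - 1) = ((k - 1) + 1) * (r * (p - 1)) := by ring
      _ = k * (r * (p - 1)) := by rw [h1]
  omega
end

section
/- Let G be a finite abelian group of order n, let λ : G → ℕ with ∑_{g∈G} λ_g = n, and let m be the monomial ∏_{g∈G} x_g^{λ_g}. Then for every a ∈ G, n · |{σ ∈ P(m) : σ(0) = a}| = λ_a · |P(m)|. -/
open MvPolynomial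

/-- Conjugation of a permutation by translation by `v`. -/
def conjT {G : Type*} [AddCommGroup G] (v : G) (σ : Equiv.Perm G) : Equiv.Perm G :=
  ((Equiv.addRight v).trans σ).trans (Equiv.addRight v)

lemma conjT_apply {G : Type*} [AddCommGroup G] (v : G) (σ : Equiv.Perm G) (t : G) :
    conjT v σ t = σ (t + v) + v := rfl

lemma conjT_conjT {G : Type*} [AddCommGroup G] (v : G) (σ : Equiv.Perm G) :
    conjT (-v) (conjT v σ) = σ := by
  ext t
  simp [conjT_apply]

lemma conjT_conjT' {G : Type*} [AddCommGroup G] (v : G) (σ : Equiv.Perm G) :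
    conjT v (conjT (-v) σ) = σ := by
  ext t
  simp [conjT_apply]

lemma prod_conjT {G : Type*} [AddCommGroup G] [Fintype G] (v : G) (σ : Equiv.Perm G) :
    (∏ u : G, (X (u + conjT v σ u) : MvPolynomial G ℤ)) = ∏ u : G, X (u + σ u) := by
  calc (∏ u : G, (X (u + conjT v σ u) : MvPolynomial G ℤ))
      = ∏ u : G, (fun s => (X (s + σ s) : MvPolynomial G ℤ)) ((Equiv.addRight v) u) := by
        refine Finset.prod_congr rfl fun u _ => ?_
        simp only [conjT_apply, Equiv.coe_addRight]
        congr 1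
        abel
    _ = ∏ s : G, (X (s + σ s) : MvPolynomial G ℤ) :=
        Equiv.prod_comp (Equiv.addRight v) (fun s => (X (s + σ s) : MvPolynomial G ℤ))

lemma count_of_prod_eq {G : Type*} [Fintype G] [DecidableEq G] (f : G → G) (lam : G → ℕ)
    (h : (∏ u : G, (X (f u) : MvPolynomial G ℤ)) = ∏ g : G, X g ^ lam g) (a : G) :
    (Finset.univ.filter fun u => f u = a).card = lam a := by
  have h2 := congrArg (aeval (fun g : G => if g = a then (Polynomial.X : Polynomial ℤ) else 1)) h
  simp only [map_prod, aeval_X, map_pow] at h2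
  rw [Finset.prod_ite, Finset.prod_const, Finset.prod_const, one_pow, mul_one] at h2
  rw [Finset.prod_eq_single a (fun g _ hg => by rw [if_neg hg, one_pow]) (by simp),
    if_pos rfl] at h2
  have h3 := congrArg Polynomial.natDegree h2
  simpa using h3

/-- **Hall fiber counting.** Let `m = ∏ g, x g ^ lam g` be a monomial of degree `n = |G|`
and `P(m) = {σ ∈ Sym(G) : ∏_u x_{u+σ(u)} = m}`. Then for every `a ∈ G`,
`n · |{σ ∈ P(m) : σ(0) = a}| = lam a · |P(m)|`. -/
theorem stmt_7 {G : Type*} [AddCommGroup G] [Fintype G] [DecidableEq G]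
    (lam : G → ℕ) (hdeg : ∑ g : G, lam g = Fintype.card G) (a : G) :
    Fintype.card G *
        (Finset.univ.filter fun σ : Equiv.Perm G =>
          (∏ u : G, (X (u + σ u) : MvPolynomial G ℤ)) = (∏ g : G, X g ^ lam g) ∧
            σ 0 = a).card =
      lam a *
        (Finset.univ.filter fun σ : Equiv.Perm G =>
          (∏ u : G, (X (u + σ u) : MvPolynomial G ℤ)) = ∏ g : G, X g ^ lam g).card := by
  classical
  set cond : Equiv.Perm G → Prop := fun σ =>
    (∏ u : G, (X (u + σ u) : MvPolynomial G ℤ)) = ∏ g : G, X g ^ lam g with hcond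
  -- the key bijection: fibers at `u` and at `0` have the same size
  have key : ∀ u : G,
      (Finset.univ.filter fun σ : Equiv.Perm G => cond σ ∧ u + σ u = a).card
        = (Finset.univ.filter fun σ : Equiv.Perm G => cond σ ∧ σ 0 = a).card := by
    intro u
    refine Finset.card_bij' (fun σ _ => conjT u σ) (fun σ _ => conjT (-u) σ) ?_ ?_ ?_ ?_
    · intro σ hσ
      rw [Finset.mem_filter] at hσ ⊢
      obtain ⟨-, h1, h2⟩ := hσ
      refine ⟨Finset.mem_univ _, ?_, ?_⟩
      · show (∏ w : G, (X (w + conjT u σ w) : MvPolynomial G ℤ)) = ∏ g : G, X g ^ lam g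
        rw [prod_conjT]; exact h1
      · rw [conjT_apply, zero_add, add_comm]; exact h2
    · intro σ hσ
      rw [Finset.mem_filter] at hσ ⊢
      obtain ⟨-, h1, h2⟩ := hσ
      refine ⟨Finset.mem_univ _, ?_, ?_⟩
      · show (∏ w : G, (X (w + conjT (-u) σ w) : MvPolynomial G ℤ)) = ∏ g : G, X g ^ lam g
        rw [prod_conjT]; exact h1
      · rw [conjT_apply, add_neg_cancel, h2]
        abel
    · intro σ _; exact conjT_conjT u σ
    · intro σ _; exact conjT_conjT' u σ
  have calc1 :
      lam a * (Finset.univ.filter fun σ : Equiv.Perm G => cond σ).card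
        = Fintype.card G *
            (Finset.univ.filter fun σ : Equiv.Perm G => cond σ ∧ σ 0 = a).card := by
    calc lam a * (Finset.univ.filter fun σ : Equiv.Perm G => cond σ).card
        = ∑ σ ∈ Finset.univ.filter fun σ : Equiv.Perm G => cond σ,
            (Finset.univ.filter fun u => u + σ u = a).card := by
          rw [Finset.sum_congr rfl fun σ hσ =>
            count_of_prod_eq (fun u => u + σ u) lam (Finset.mem_filter.mp hσ).2 a]
          rw [Finset.sum_const, smul_eq_mul, mul_comm]
      _ = ∑ σ ∈ Finset.univ.filter fun σ : Equiv.Perm G => cond σ,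
            ∑ u : G, if u + σ u = a then 1 else 0 := by
          refine Finset.sum_congr rfl fun σ _ => ?_
          rw [Finset.card_filter]
      _ = ∑ u : G, ∑ σ ∈ Finset.univ.filter fun σ : Equiv.Perm G => cond σ,
            if u + σ u = a then 1 else 0 := Finset.sum_comm
      _ = ∑ u : G,
            (Finset.univ.filter fun σ : Equiv.Perm G => cond σ ∧ u + σ u = a).card := by
          refine Finset.sum_congr rfl fun u _ => ?_
          rw [← Finset.card_filter, Finset.filter_filter]
      _ = ∑ _u : G,
            (Finset.univ.filter fun σ : Equiv.Perm G => cond σ ∧ σ 0 = a).card :=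
          Finset.sum_congr rfl fun u _ => key u
      _ = Fintype.card G *
            (Finset.univ.filter fun σ : Equiv.Perm G => cond σ ∧ σ 0 = a).card := by
          rw [Finset.sum_const, smul_eq_mul, Finset.card_univ]
  exact calc1.symm
end

section
/- Let G be a finite abelian group of order n, let λ : G → ℕ with ∑_{g∈G} λ_g = n, and let m be the monomial ∏_{g∈G} x_g^{λ_g}. Then for every a ∈ G, n · ∑_{σ ∈ P(m), σ(0)=a} sgn(σ) = λ_a · ∑_{σ ∈ P(m)} sgn(σ), as an identity of integers. -/
open MvPolynomial

private lemma count_lemma {G : Type*} [AddCommGroup G] [Fintype G] [DecidableEq G]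
    (lam : G → ℕ) (σ : Equiv.Perm G)
    (h : (∏ u : G, (X (u + σ u) : MvPolynomial G ℤ)) = ∏ g : G, X g ^ lam g) (b : G) :
    (Finset.univ.filter (fun u : G => u + σ u = b)).card = lam b := by
  have h1 : (∏ u : G, (X (u + σ u) : MvPolynomial G ℤ)) =
      monomial (∑ u : G, Finsupp.single (u + σ u) 1) 1 := by
    rw [monomial_sum_one]
    simp [X, monomial_eq_monomial_iff]
  have h2 : (∏ g : G, (X g ^ lam g : MvPolynomial G ℤ)) =
      monomial (∑ g : G, Finsupp.single g (lam g)) 1 := by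
    rw [monomial_sum_one]
    exact Finset.prod_congr rfl fun g _ => X_pow_eq_monomial
  rw [h1, h2] at h
  have h3 := monomial_left_injective (R := ℤ) one_ne_zero h
  have h4 := DFunLike.congr_fun h3 b
  simp only [Finsupp.coe_finset_sum, Finset.sum_apply, Finsupp.single_apply] at h4
  rw [Finset.sum_ite_eq' Finset.univ b lam, if_pos (Finset.mem_univ b)] at h4
  rw [← h4, Finset.card_filter]

/-- **Signed Hall fiber counting.** Let `m = ∏ g, x g ^ lam g` be a monomial of degree
`n = |G|` and `P(m) = {σ ∈ Sym(G) : ∏_u x_{u+σ(u)} = m}`. Then for every `a ∈ G`,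
`n · ∑_{σ ∈ P(m), σ(0)=a} sgn(σ) = lam a · ∑_{σ ∈ P(m)} sgn(σ)` in `ℤ`. -/
theorem stmt_8 {G : Type*} [AddCommGroup G] [Fintype G] [DecidableEq G]
    (lam : G → ℕ) (hdeg : ∑ g : G, lam g = Fintype.card G) (a : G) :
    (Fintype.card G : ℤ) *
        ∑ σ ∈ Finset.univ.filter (fun σ : Equiv.Perm G =>
            (∏ u : G, (X (u + σ u) : MvPolynomial G ℤ)) = (∏ g : G, X g ^ lam g) ∧
              σ 0 = a),
          (Equiv.Perm.sign σ : ℤ) =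
      (lam a : ℤ) *
        ∑ σ ∈ Finset.univ.filter (fun σ : Equiv.Perm G =>
            (∏ u : G, (X (u + σ u) : MvPolynomial G ℤ)) = ∏ g : G, X g ^ lam g),
          (Equiv.Perm.sign σ : ℤ) := by
  classical
  -- Step 1: for each c, the fiber sum at c equals the fiber sum at 0.
  have step1 : ∀ c : G,
      (∑ σ ∈ Finset.univ.filter (fun σ : Equiv.Perm G =>
          ((∏ u : G, (X (u + σ u) : MvPolynomial G ℤ)) = ∏ g : G, X g ^ lam g) ∧ c + σ c = a),
        (Equiv.Perm.sign σ : ℤ)) =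
      ∑ σ ∈ Finset.univ.filter (fun σ : Equiv.Perm G =>
          ((∏ u : G, (X (u + σ u) : MvPolynomial G ℤ)) = ∏ g : G, X g ^ lam g) ∧ σ 0 = a),
        (Equiv.Perm.sign σ : ℤ) := by
    intro c
    set e : Equiv.Perm G := Equiv.addRight c with he
    refine Finset.sum_bijective (fun σ => e * σ * e)
      ((Group.mulLeft_bijective e).comp (Group.mulRight_bijective e)) ?_ ?_
    · intro σ
      simp only [Finset.mem_filter, Finset.mem_univ, true_and]
      have hprod : (∏ u : G, (X (u + (e * σ * e) u) : MvPolynomial G ℤ)) =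
          ∏ u : G, (X (u + σ u) : MvPolynomial G ℤ) := by
        rw [← Equiv.prod_comp e (fun w => (X (w + σ w) : MvPolynomial G ℤ))]
        refine Finset.prod_congr rfl fun u _ => ?_
        have h5 : u + (e * σ * e) u = e u + σ (e u) := by
          simp only [he, Equiv.Perm.mul_apply, Equiv.coe_addRight]
          abel
        rw [h5]
      have h0 : (e * σ * e) 0 = c + σ c := by
        simp [he, Equiv.Perm.mul_apply, add_comm]
      rw [hprod, h0]
    · intro σ _
      have hs : Equiv.Perm.sign (e * σ * e) = Equiv.Perm.sign σ := by
        rw [map_mul, map_mul, mul_comm (Equiv.Perm.sign e), mul_assoc,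
          Int.units_mul_self, mul_one]
      rw [hs]
  have lhs_eq : (Fintype.card G : ℤ) *
      (∑ σ ∈ Finset.univ.filter (fun σ : Equiv.Perm G =>
          ((∏ u : G, (X (u + σ u) : MvPolynomial G ℤ)) = ∏ g : G, X g ^ lam g) ∧ σ 0 = a),
        (Equiv.Perm.sign σ : ℤ)) =
      ∑ c : G, ∑ σ ∈ Finset.univ.filter (fun σ : Equiv.Perm G =>
          ((∏ u : G, (X (u + σ u) : MvPolynomial G ℤ)) = ∏ g : G, X g ^ lam g) ∧ c + σ c = a),
        (Equiv.Perm.sign σ : ℤ) := by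
    rw [Finset.sum_congr rfl (fun c _ => step1 c), Finset.sum_const, Finset.card_univ,
      nsmul_eq_mul]
  rw [lhs_eq]
  -- swap the double sum
  have swap : (∑ c : G, ∑ σ ∈ Finset.univ.filter (fun σ : Equiv.Perm G =>
        ((∏ u : G, (X (u + σ u) : MvPolynomial G ℤ)) = ∏ g : G, X g ^ lam g) ∧ c + σ c = a),
        (Equiv.Perm.sign σ : ℤ)) =
      ∑ σ ∈ Finset.univ.filter (fun σ : Equiv.Perm G =>
          (∏ u : G, (X (u + σ u) : MvPolynomial G ℤ)) = ∏ g : G, X g ^ lam g),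
        ∑ c ∈ Finset.univ.filter (fun c : G => c + σ c = a), (Equiv.Perm.sign σ : ℤ) := by
    rw [Finset.sum_comm' (s := Finset.univ)
      (t := fun c => Finset.univ.filter (fun σ : Equiv.Perm G =>
        ((∏ u : G, (X (u + σ u) : MvPolynomial G ℤ)) = ∏ g : G, X g ^ lam g) ∧ c + σ c = a))
      (t' := Finset.univ.filter (fun σ : Equiv.Perm G =>
          (∏ u : G, (X (u + σ u) : MvPolynomial G ℤ)) = ∏ g : G, X g ^ lam g))
      (s' := fun σ => Finset.univ.filter (fun c : G => c + σ c = a))]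
    intro c σ
    simp only [Finset.mem_filter, Finset.mem_univ, true_and]
    tauto
  rw [swap, Finset.mul_sum]
  refine Finset.sum_congr rfl fun σ hσ => ?_
  rw [Finset.mem_filter] at hσ
  rw [Finset.sum_const, nsmul_eq_mul, count_lemma lam σ hσ.2 a]
end

section
/- Let G be a finite abelian group of order n, let λ : G → ℕ with ∑_{g∈G} λ_g = n, and let m be the monomial ∏_{g∈G} x_g^{λ_g}. Then n · [m] imm_{(n−1,1)}(M_G) = (∑_{a∈G} r(a)·λ_a − n) · p_m, where [m] denotes the coefficient of the monomial m, r(a) = |{g ∈ G : 2g = a}|, and p_m = |P(m)|. -/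
open MvPolynomial Finset

namespace Stmt9Aux

variable {G : Type*} [AddCommGroup G] [Fintype G] [DecidableEq G]

/-- The exponent finsupp of the monomial `∏ u, X (u + σ u)`. -/
noncomputable def expo (σ : Equiv.Perm G) : G →₀ ℕ := ∑ u : G, Finsupp.single (u + σ u) 1

lemma prod_X_eq (σ : Equiv.Perm G) :
    (∏ u : G, (X (u + σ u) : MvPolynomial G ℤ)) = monomial (expo σ) 1 := by
  rw [expo, monomial_sum_one]
  refine Finset.prod_congr rfl fun u _ => ?_
  rw [← X_pow_eq_monomial, pow_one]

lemma prod_X_pow_eq (lam : G → ℕ) :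
    (∏ g : G, (X g ^ lam g : MvPolynomial G ℤ))
      = monomial (Finsupp.equivFunOnFinite.symm lam) 1 := by
  have h : (Finsupp.equivFunOnFinite.symm lam : G →₀ ℕ)
      = ∑ g : G, Finsupp.single g (lam g) := by
    ext a
    simp [Finsupp.finset_sum_apply, Finsupp.single_apply]
  rw [h, monomial_sum_one]
  exact Finset.prod_congr rfl fun g _ => X_pow_eq_monomial

lemma expo_apply (σ : Equiv.Perm G) (a : G) :
    expo σ a = (Finset.univ.filter fun u : G => u + σ u = a).card := by
  rw [expo, Finsupp.finset_sum_apply, Finset.card_filter]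
  refine Finset.sum_congr rfl fun u _ => ?_
  simp [Finsupp.single_apply]

/-- The twist action `σ ↦ (v ↦ σ (v + c) + c)`. -/
def tw (c : G) (σ : Equiv.Perm G) : Equiv.Perm G :=
  ((Equiv.addRight c).trans σ).trans (Equiv.addRight c)

lemma tw_apply (c : G) (σ : Equiv.Perm G) (v : G) : tw c σ v = σ (v + c) + c := rfl

lemma tw_tw (c : G) (σ : Equiv.Perm G) : tw (-c) (tw c σ) = σ := by
  ext v
  simp [tw_apply]

lemma expo_tw (c : G) (σ : Equiv.Perm G) : expo (tw c σ) = expo σ := by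
  rw [expo, expo,
    ← Equiv.sum_comp (Equiv.addRight c) (fun u => Finsupp.single (u + σ u) (1 : ℕ))]
  refine Finset.sum_congr rfl fun v _ => ?_
  have h : v + tw c σ v = Equiv.addRight c v + σ (Equiv.addRight c v) := by
    simp only [tw_apply, Equiv.coe_addRight]
    abel
  rw [h]

/-- Key per-σ count: the total number of fixed points of all twists of `σ`. -/
lemma sum_fix_tw (σ : Equiv.Perm G) :
    ∑ c : G, (Finset.univ.filter fun v : G => tw c σ v = v).card
      = ∑ u : G, (Finset.univ.filter fun g : G => g + g = u + σ u).card := by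
  have step1 : ∀ c : G,
      (Finset.univ.filter fun v : G => tw c σ v = v).card
        = ∑ u : G, if σ u + c = u - c then 1 else 0 := by
    intro c
    rw [Finset.card_filter]
    rw [← Equiv.sum_comp (Equiv.addRight (-c))
      (fun v => if tw c σ v = v then 1 else 0)]
    refine Finset.sum_congr rfl fun u _ => ?_
    simp only [Equiv.coe_addRight, tw_apply]
    congr 1
    · rw [eq_iff_iff]
      constructor
      · intro h
        have h2 : σ (u + -c + c) + c + c = u + -c + c := congrArg (· + c) h
        rw [neg_add_cancel_right] at h2
        rw [eq_sub_iff_add_eq]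
        exact h2
      · intro h
        rw [eq_sub_iff_add_eq] at h
        rw [neg_add_cancel_right, ← sub_eq_add_neg, eq_sub_iff_add_eq]
        exact h
  calc ∑ c : G, (Finset.univ.filter fun v : G => tw c σ v = v).card
      = ∑ c : G, ∑ u : G, if σ u + c = u - c then 1 else 0 :=
        Finset.sum_congr rfl fun c _ => step1 c
    _ = ∑ u : G, ∑ c : G, if σ u + c = u - c then 1 else 0 := Finset.sum_comm
    _ = ∑ u : G, (Finset.univ.filter fun g : G => g + g = u + σ u).card := by
        refine Finset.sum_congr rfl fun u _ => ?_
        rw [Finset.card_filter]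
        refine Fintype.sum_equiv (Equiv.addRight (σ u))
          (fun c => if σ u + c = u - c then 1 else 0)
          (fun g => if g + g = u + σ u then 1 else 0) fun c => ?_
        simp only [Equiv.coe_addRight]
        congr 1
        rw [eq_iff_iff, eq_sub_iff_add_eq,
          show (c + σ u) + (c + σ u) = (σ u + c + c) + σ u from by abel]
        exact (add_left_inj _).symm

/-- For `σ ∈ P(m)`, `∑_u r (u + σ u) = ∑_a r a * lam a`. -/
lemma sum_r_eq (σ : Equiv.Perm G) (lam : G → ℕ)
    (h : expo σ = Finsupp.equivFunOnFinite.symm lam) :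
    ∑ u : G, (Finset.univ.filter fun g : G => g + g = u + σ u).card
      = ∑ a : G, (Finset.univ.filter fun g : G => g + g = a).card * lam a := by
  have hlam : ∀ a : G, (Finset.univ.filter fun u : G => u + σ u = a).card = lam a := by
    intro a
    rw [← expo_apply, h]
    simp
  calc ∑ u : G, (Finset.univ.filter fun g : G => g + g = u + σ u).card
      = ∑ u : G, ∑ a : G,
          if u + σ u = a then (Finset.univ.filter fun g : G => g + g = a).card else 0 := by
        refine Finset.sum_congr rfl fun u _ => ?_
        rw [Finset.sum_ite_eq Finset.univ (u + σ u)
          (fun a => (Finset.univ.filter fun g : G => g + g = a).card)]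
        simp
    _ = ∑ a : G, ∑ u : G,
          if u + σ u = a then (Finset.univ.filter fun g : G => g + g = a).card else 0 :=
        Finset.sum_comm
    _ = ∑ a : G, (Finset.univ.filter fun g : G => g + g = a).card * lam a := by
        refine Finset.sum_congr rfl fun a _ => ?_
        rw [← Finset.sum_filter, Finset.sum_const, hlam, smul_eq_mul, mul_comm]

lemma sum_fix_inv (lam : G → ℕ) (c : G) :
    ∑ σ ∈ Finset.univ.filter
        (fun σ : Equiv.Perm G => expo σ = Finsupp.equivFunOnFinite.symm lam),
      (Finset.univ.filter fun u : G => tw c σ u = u).card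
      = ∑ σ ∈ Finset.univ.filter
          (fun σ : Equiv.Perm G => expo σ = Finsupp.equivFunOnFinite.symm lam),
        (Finset.univ.filter fun u : G => σ u = u).card := by
  refine Finset.sum_nbij' (tw c) (tw (-c)) ?_ ?_ ?_ ?_ ?_
  · intro σ hσ
    simp only [Finset.mem_filter, Finset.mem_univ, true_and] at hσ ⊢
    rw [expo_tw, hσ]
  · intro σ hσ
    simp only [Finset.mem_filter, Finset.mem_univ, true_and] at hσ ⊢
    rw [expo_tw, hσ]
  · intro σ _; exact tw_tw c σ
  · intro σ _
    have := tw_tw (-c) σ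
    rwa [neg_neg] at this
  · intro σ _; rfl

/-- The main counting identity over `P(m)`. -/
lemma main_count (lam : G → ℕ) :
    Fintype.card G *
        ∑ σ ∈ Finset.univ.filter
            (fun σ : Equiv.Perm G => expo σ = Finsupp.equivFunOnFinite.symm lam),
          (Finset.univ.filter fun u : G => σ u = u).card
      = (∑ a : G, (Finset.univ.filter fun g : G => g + g = a).card * lam a) *
          (Finset.univ.filter
            (fun σ : Equiv.Perm G => expo σ = Finsupp.equivFunOnFinite.symm lam)).card := by
  set P := Finset.univ.filter
    (fun σ : Equiv.Perm G => expo σ = Finsupp.equivFunOnFinite.symm lam) with hP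
  calc Fintype.card G * ∑ σ ∈ P, (Finset.univ.filter fun u : G => σ u = u).card
      = ∑ _c : G, ∑ σ ∈ P, (Finset.univ.filter fun u : G => σ u = u).card := by
        rw [Finset.sum_const, Finset.card_univ, smul_eq_mul]
    _ = ∑ c : G, ∑ σ ∈ P, (Finset.univ.filter fun u : G => tw c σ u = u).card := by
        exact Finset.sum_congr rfl fun c _ => (sum_fix_inv lam c).symm
    _ = ∑ σ ∈ P, ∑ c : G, (Finset.univ.filter fun u : G => tw c σ u = u).card :=
        Finset.sum_comm
    _ = ∑ σ ∈ P, (∑ a : G, (Finset.univ.filter fun g : G => g + g = a).card * lam a) := by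
        refine Finset.sum_congr rfl fun σ hσ => ?_
        rw [sum_fix_tw]
        refine sum_r_eq σ lam ?_
        simpa [hP] using hσ
    _ = (∑ a : G, (Finset.univ.filter fun g : G => g + g = a).card * lam a) * P.card := by
        rw [Finset.sum_const, smul_eq_mul, mul_comm]

end Stmt9Aux

/-- **Coefficient formula for `imm_{(n−1,1)}(M_G)`.** For a monomial
`m = ∏ g, x g ^ lam g` of degree `n = |G|`,
`n · [m] imm_{(n−1,1)}(M_G) = (∑_a r(a)·lam a − n) · p_m`, where
`r(a) = |{g : 2g = a}|` and `p_m = |P(m)|`. -/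
theorem stmt_9 {G : Type*} [AddCommGroup G] [Fintype G] [DecidableEq G]
    (lam : G → ℕ) (hdeg : ∑ g : G, lam g = Fintype.card G) :
    (Fintype.card G : ℤ) *
        MvPolynomial.coeff (Finsupp.equivFunOnFinite.symm lam)
          (∑ σ : Equiv.Perm G,
            (C (((Finset.univ.filter fun u : G => σ u = u).card : ℤ) - 1) : MvPolynomial G ℤ) *
              ∏ a : G, X (a + σ a)) =
      ((∑ a : G, ((Finset.univ.filter fun g : G => g + g = a).card : ℤ) * lam a) -
          (Fintype.card G : ℤ)) *
        ((Finset.univ.filter fun σ : Equiv.Perm G =>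
            (∏ u : G, (X (u + σ u) : MvPolynomial G ℤ)) = ∏ g : G, X g ^ lam g).card : ℤ) := by
  classical
  set L : G →₀ ℕ := Finsupp.equivFunOnFinite.symm lam with hL
  -- the filter in the statement is the filter by `expo`
  have hPeq : (Finset.univ.filter fun σ : Equiv.Perm G =>
      (∏ u : G, (X (u + σ u) : MvPolynomial G ℤ)) = ∏ g : G, X g ^ lam g)
      = Finset.univ.filter (fun σ : Equiv.Perm G => Stmt9Aux.expo σ = L) := by
    refine Finset.filter_congr fun σ _ => ?_
    rw [Stmt9Aux.prod_X_eq, Stmt9Aux.prod_X_pow_eq, ← hL]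
    constructor
    · intro h
      exact MvPolynomial.monomial_left_injective (one_ne_zero) h
    · intro h; rw [h]
  set P := Finset.univ.filter (fun σ : Equiv.Perm G => Stmt9Aux.expo σ = L) with hP
  -- compute the coefficient
  have hcoeff : MvPolynomial.coeff L
      (∑ σ : Equiv.Perm G,
        (C (((Finset.univ.filter fun u : G => σ u = u).card : ℤ) - 1) : MvPolynomial G ℤ) *
          ∏ a : G, X (a + σ a))
      = ∑ σ ∈ P, (((Finset.univ.filter fun u : G => σ u = u).card : ℤ) - 1) := by
    rw [MvPolynomial.coeff_sum]
    rw [hP, Finset.sum_filter]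
    refine Finset.sum_congr rfl fun σ _ => ?_
    rw [Stmt9Aux.prod_X_eq, MvPolynomial.C_mul_monomial, mul_one,
      MvPolynomial.coeff_monomial]
  rw [hcoeff, hPeq]
  -- main counting identity, cast to ℤ
  have hmain := Stmt9Aux.main_count (G := G) lam
  rw [← hP] at hmain
  have hmainZ : (Fintype.card G : ℤ) *
      ∑ σ ∈ P, ((Finset.univ.filter fun u : G => σ u = u).card : ℤ)
      = (∑ a : G, ((Finset.univ.filter fun g : G => g + g = a).card : ℤ) * lam a) *
          (P.card : ℤ) := by
    exact_mod_cast congrArg (Nat.cast : ℕ → ℤ) hmain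
  rw [Finset.sum_sub_distrib, Finset.sum_const, mul_sub, hmainZ, sub_mul, nsmul_eq_mul,
    mul_one, mul_comm (Fintype.card G : ℤ) (P.card : ℤ)]
end

section
/- Let G be a finite abelian group of odd order n. Then imm_{(n−1,1)}(M_G) = 0 and imm_{(2,1^{n−2})}(M_G) = 0 as polynomials; that is, ∑_{σ∈Sym(G)} (Fix(σ)−1) ∏_{a∈G} x_{a+σ(a)} = 0 and ∑_{σ∈Sym(G)} sgn(σ)(Fix(σ)−1) ∏_{a∈G} x_{a+σ(a)} = 0 in ℤ[x_g : g ∈ G]. -/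
open MvPolynomial

private lemma double_inj {G : Type*} [AddCommGroup G] [Fintype G]
    (hodd : Odd (Fintype.card G)) : Function.Injective (fun g : G => g + g) := by
  intro a b h
  simp only at h
  have h4 : (a - b) + (a - b) = 0 := by rw [sub_add_sub_comm, h, sub_self]
  have h5 : addOrderOf (a - b) ∣ 2 :=
    addOrderOf_dvd_of_nsmul_eq_zero (by rw [two_nsmul]; exact h4)
  have h6 : addOrderOf (a - b) ∣ Fintype.card G := addOrderOf_dvd_card
  have hc2 : Nat.Coprime 2 (Fintype.card G) :=
    Nat.prime_two.coprime_iff_not_dvd.mpr (by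
      intro hdvd
      exact (Nat.not_even_iff_odd.mpr hodd) (even_iff_two_dvd.mpr hdvd))
  have h7 : addOrderOf (a - b) ∣ 1 := hc2 ▸ Nat.dvd_gcd h5 h6
  have h8 : a - b = 0 := AddMonoid.addOrderOf_eq_one_iff.mp (Nat.dvd_one.mp h7)
  exact sub_eq_zero.mp h8

private lemma aux_imm {G : Type*} [AddCommGroup G] [Fintype G] [DecidableEq G]
    (hodd : Odd (Fintype.card G)) (c : Equiv.Perm G → ℤ)
    (hc : ∀ (g : G) (σ : Equiv.Perm G),
      c (Equiv.addLeft g * (σ * Equiv.addLeft g)) = c σ) :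
    (∑ σ : Equiv.Perm G,
        (C (c σ * (((Finset.univ.filter fun u : G => σ u = u).card : ℤ) - 1)) :
          MvPolynomial G ℤ) * ∏ a : G, X (a + σ a)) = 0 := by
  classical
  set P : Equiv.Perm G → MvPolynomial G ℤ := fun σ => ∏ a : G, X (a + σ a) with hP
  -- product is invariant under conjugation by translation
  have hPconj : ∀ (g : G) (σ : Equiv.Perm G),
      P (Equiv.addLeft g * (σ * Equiv.addLeft g)) = P σ := by
    intro g σ
    simp only [hP]
    refine Fintype.prod_equiv (Equiv.addLeft g)
      (fun a => X (a + (Equiv.addLeft g * (σ * Equiv.addLeft g)) a))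
      (fun b => X (b + σ b)) ?_
    intro a
    have happ : (Equiv.addLeft g * (σ * Equiv.addLeft g)) a = g + σ (g + a) := by
      simp [Equiv.Perm.mul_apply]
    simp only [happ, Equiv.coe_addLeft]
    congr 1
    abel
  -- step 1: rewrite each summand
  have step1 : ∀ σ : Equiv.Perm G,
      (C (c σ * (((Finset.univ.filter fun u : G => σ u = u).card : ℤ) - 1)) :
        MvPolynomial G ℤ) * P σ
      = (∑ g : G, if σ g = g then C (c σ) * P σ else 0) - C (c σ) * P σ := by
    intro σ
    rw [← Finset.sum_filter, Finset.sum_const, nsmul_eq_mul]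
    have hcast : ((((Finset.univ.filter fun u : G => σ u = u).card : ℕ)) :
        MvPolynomial G ℤ) = C (((Finset.univ.filter fun u : G => σ u = u).card : ℤ)) := by
      simp
    rw [hcast, show c σ * (((Finset.univ.filter fun u : G => σ u = u).card : ℤ) - 1)
      = ((Finset.univ.filter fun u : G => σ u = u).card : ℤ) * c σ - c σ from by ring,
      map_sub, map_mul]
    ring
  rw [Finset.sum_congr rfl (fun σ _ => step1 σ), Finset.sum_sub_distrib, sub_eq_zero,
    Finset.sum_comm]
  -- for each g, reindex the inner sum by conjugation with translation by g
  have key : ∀ g : G,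
      (∑ σ : Equiv.Perm G, if σ g = g then C (c σ) * P σ else 0)
      = ∑ σ : Equiv.Perm G, if σ 0 = g + g then C (c σ) * P σ else 0 := by
    intro g
    refine Fintype.sum_equiv
      ((Equiv.mulRight (Equiv.addLeft g : Equiv.Perm G)).trans
        (Equiv.mulLeft (Equiv.addLeft g : Equiv.Perm G)))
      _ _ ?_
    intro σ
    have hform : ((Equiv.mulRight (Equiv.addLeft g : Equiv.Perm G)).trans
        (Equiv.mulLeft (Equiv.addLeft g : Equiv.Perm G))) σ
        = Equiv.addLeft g * (σ * Equiv.addLeft g) := by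
      simp [mul_assoc]
    rw [hform]
    have happ0 : (Equiv.addLeft g * (σ * Equiv.addLeft g)) 0 = g + σ g := by
      simp [Equiv.Perm.mul_apply]
    rw [happ0, hc g σ, hPconj g σ]
    by_cases h : σ g = g
    · rw [if_pos h, if_pos (by rw [h])]
    · rw [if_neg h, if_neg (by intro hh; exact h (add_left_cancel hh))]
  rw [Finset.sum_congr rfl (fun g _ => key g)]
  -- reindex outer sum with the doubling bijection
  have hbij : Function.Bijective (fun g : G => g + g) :=
    Finite.injective_iff_bijective.mp (double_inj hodd)
  rw [Fintype.sum_equiv (Equiv.ofBijective _ hbij)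
    (fun g => ∑ σ : Equiv.Perm G, if σ 0 = g + g then C (c σ) * P σ else 0)
    (fun u => ∑ σ : Equiv.Perm G, if σ 0 = u then C (c σ) * P σ else 0)
    (fun g => rfl), Finset.sum_comm]
  refine Finset.sum_congr rfl fun σ _ => ?_
  simp

/-- **Vanishing of the near-hook immanants in odd order.** If `|G|` is odd, then
`imm_{(n−1,1)}(M_G) = 0` and `imm_{(2,1^{n−2})}(M_G) = 0` as polynomials. -/
theorem stmt_11 {G : Type*} [AddCommGroup G] [Fintype G] [DecidableEq G]
    (hodd : Odd (Fintype.card G)) :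
    (∑ σ : Equiv.Perm G,
        (C (((Finset.univ.filter fun u : G => σ u = u).card : ℤ) - 1) : MvPolynomial G ℤ) *
          ∏ a : G, X (a + σ a)) = 0 ∧
    (∑ σ : Equiv.Perm G,
        (C ((Equiv.Perm.sign σ : ℤ) *
            (((Finset.univ.filter fun u : G => σ u = u).card : ℤ) - 1)) : MvPolynomial G ℤ) *
          ∏ a : G, X (a + σ a)) = 0 := by
  constructor
  · have h := aux_imm hodd (fun _ => 1) (fun g σ => rfl)
    simpa using h
  · refine aux_imm hodd (fun σ => (Equiv.Perm.sign σ : ℤ)) ?_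
    intro g σ
    have : Equiv.Perm.sign (Equiv.addLeft g * (σ * Equiv.addLeft g))
        = Equiv.Perm.sign σ := by
      rw [map_mul, map_mul]
      rcases Int.units_eq_one_or (Equiv.Perm.sign (Equiv.addLeft g : Equiv.Perm G)) with h | h <;>
        simp [h]
    simp [this]
end

section
/- Let G be a finite abelian group of order n with n ≡ 2 (mod 4). Then the set of monomials occurring with nonzero coefficient in imm_{(n−1,1)}(M_G) equals the set of monomials occurring with nonzero coefficient in per(M_G), and the set of monomials occurring with nonzero coefficient in imm_{(2,1^{n−2})}(M_G) equals the set of monomials occurring with nonzero coefficient in det(M_G). -/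
/-!
Twisting a permutation `σ` of `G` by `c ∈ G` into `a ↦ σ (a + c) + c` changes neither its sign
nor the monomial `∏ₐ x_{a + σ a}`. The twist by `c` fixes `a` iff `2c = b - σ b` for `b = a + c`.
Since `n ≡ 2 (mod 4)`, the doubling map has a kernel of order 2, so its image `2G` has index 2,
and summing the fixed-point counts of all twists of `σ` gives `2m`, where
`m = #{b | b + σ b ∈ 2G}` depends only on the monomial. Hence, if `F = ∑ w(σ) Fix(σ)` and
`B = ∑ w(σ)` are taken over the permutations with a given monomial, for a twist-invariant weight `w`,
then `(n/2) F = m B`. Now `n/2` is odd while `m` is even, because modulo 2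
`[b + σ b ∈ 2G] = 1 + [b ∈ 2G] + [σ b ∈ 2G]`. So `F = B` forces `B = 0`, and `B = 0` forces `F = 0`:
the coefficient `F - B` vanishes exactly when `B` does.
-/

open MvPolynomial Finset Equiv

namespace CayleyImmanant

variable {G : Type*} [AddCommGroup G]

variable (G) in
abbrev doubles : AddSubgroup G := (nsmulAddMonoidHom 2 : G →+ G).range

lemma two_nsmul_mem_doubles (c : G) : 2 • c ∈ doubles G := ⟨c, rfl⟩

lemma sub_mem_doubles_iff (x y : G) : x - y ∈ doubles G ↔ x + y ∈ doubles G := by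
  rw [show x + y = x - y + 2 • y by abel,
    AddSubgroup.add_mem_cancel_right _ (two_nsmul_mem_doubles y)]

section Finite

variable [Finite G]

lemma card_ker_two_nsmul (hmod : Nat.card G % 4 = 2) :
    Nat.card (nsmulAddMonoidHom 2 : G →+ G).ker = 2 := by
  set K := (nsmulAddMonoidHom 2 : G →+ G).ker
  obtain ⟨k, -, hk⟩ := (Nat.dvd_prime_pow Nat.prime_two).1 <|
    card_dvd_exponent_nsmul_rank' K (n := 2) fun x => Subtype.ext x.2
  have hkG : 2 ^ k ∣ Nat.card G := hk ▸ K.card_addSubgroup_dvd_card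
  have hk1 : k ≤ 1 := by
    by_contra! h
    have : 4 ∣ Nat.card G := (pow_dvd_pow 2 h).trans hkG
    omega
  have hk0 : k ≠ 0 := by
    rintro rfl
    have : Fact (Nat.Prime 2) := ⟨Nat.prime_two⟩
    obtain ⟨x, hx⟩ := exists_prime_addOrderOf_dvd_card' (G := G) 2 (by omega)
    have hxK : x ∈ K := by simp [K, ← hx]
    have hx0 : x = 0 := by simpa using (AddSubgroup.card_eq_one.1 (by simp [hk])).le hxK
    simp [hx0] at hx
  rw [hk, show k = 1 by omega, pow_one]

lemma index_doubles (hmod : Nat.card G % 4 = 2) : (doubles G).index = 2 := by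
  rw [AddSubgroup.index_range, card_ker_two_nsmul hmod]

end Finite

def twist (c : G) : Perm G ≃ Perm G :=
  (Equiv.mulRight (Equiv.addRight c)).trans (Equiv.mulLeft (Equiv.addRight c))

lemma twist_apply (c : G) (σ : Perm G) (a : G) : twist c σ a = σ (a + c) + c := rfl

section Fintype

variable [Fintype G]

noncomputable def cayleyDegree (σ : Perm G) : G →₀ ℕ := ∑ a, Finsupp.single (a + σ a) 1

lemma prod_X_add_eq_monomial (σ : Perm G) :
    ∏ a, (X (a + σ a) : MvPolynomial G ℤ) = monomial (cayleyDegree σ) 1 := by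
  simp only [cayleyDegree, monomial_sum_one, X]

lemma cayleyDegree_twist (c : G) (σ : Perm G) : cayleyDegree (twist c σ) = cayleyDegree σ := by
  refine Fintype.sum_equiv (Equiv.addRight c) _ _ fun a => ?_
  simp only [twist_apply, Equiv.coe_addRight]
  congr 1
  abel

variable [DecidableEq G]

lemma sign_twist (c : G) (σ : Perm G) : Perm.sign (twist c σ) = Perm.sign σ := by
  simp only [twist, Equiv.trans_apply, Equiv.coe_mulRight, Equiv.coe_mulLeft, map_mul]
  rw [mul_left_comm, Int.units_mul_self, mul_one]

lemma card_filter_two_nsmul_eq (hmod : Nat.card G % 4 = 2) (g : G) :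
    #{c : G | 2 • c = g} = if g ∈ doubles G then 2 else 0 := by
  split_ifs with hg
  · have hfib := AddMonoidHom.card_fiber_eq_of_mem_range (nsmulAddMonoidHom 2 : G →+ G) hg
      ⟨0, map_zero _⟩
    simp only [nsmulAddMonoidHom_apply] at hfib
    rw [hfib, ← Fintype.card_subtype, ← Nat.card_eq_fintype_card]
    exact card_ker_two_nsmul hmod
  · rw [card_eq_zero, filter_eq_empty_iff]
    exact fun c _ hc => hg ⟨c, hc⟩

lemma sum_doubles_cayleyDegree (σ : Perm G) :
    ∑ g with g ∈ doubles G, cayleyDegree σ g = #{b | b + σ b ∈ doubles G} := by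
  simp only [cayleyDegree, Finsupp.finsetSum_apply]
  rw [sum_comm, card_filter]
  refine sum_congr rfl fun a _ => ?_
  simp [Finsupp.single_apply]

lemma card_fixed_twist (c : G) (σ : Perm G) :
    #{a | twist c σ a = a} = #{b | 2 • c = b - σ b} := by
  refine card_equiv (Equiv.addRight c) fun a => ?_
  rw [mem_filter, mem_filter]
  simp only [mem_univ, true_and, twist_apply, Equiv.coe_addRight]
  rw [← sub_eq_zero (a := σ (a + c) + c), ← sub_eq_zero (a := 2 • c),
    show 2 • c - (a + c - σ (a + c)) = σ (a + c) + c - a by abel]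

lemma sum_card_fixed_twist (hmod : Nat.card G % 4 = 2) (σ : Perm G) :
    ∑ c, #{a | twist c σ a = a} = 2 * #{b | b + σ b ∈ doubles G} := by
  simp_rw [card_fixed_twist, card_filter]
  rw [sum_comm]
  simp_rw [← card_filter, card_filter_two_nsmul_eq hmod, sub_mem_doubles_iff]
  rw [card_filter, mul_sum]
  exact sum_congr rfl fun b _ => by split_ifs <;> rfl

lemma even_card_add_mem_doubles (hmod : Nat.card G % 4 = 2) (σ : Perm G) :
    Even #{b | b + σ b ∈ doubles G} := by
  have hG : Even (Fintype.card G) := by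
    rw [← Nat.card_eq_fintype_card]; exact Nat.even_iff.2 (by omega)
  have hparity : ∀ b, (if b + σ b ∈ doubles G then 1 else 0 : ZMod 2) =
      1 + (if b ∈ doubles G then 1 else 0) + (if σ b ∈ doubles G then 1 else 0) := by
    intro b
    by_cases hb : b ∈ doubles G <;> by_cases hσb : σ b ∈ doubles G <;>
      simp [AddSubgroup.add_mem_iff_of_index_two (index_doubles hmod), hb, hσb] <;> decide
  rw [← ZMod.natCast_eq_zero_iff_even, natCast_card_filter, sum_congr rfl fun b _ => hparity b,
    sum_add_distrib, sum_add_distrib, Equiv.sum_comp σ (fun b => if b ∈ doubles G then 1 else 0)]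
  rw [add_assoc, ← two_mul, show (2 : ZMod 2) = 0 from rfl, zero_mul, add_zero, sum_const,
    card_univ, nsmul_one, (ZMod.natCast_eq_zero_iff_even).2 hG]

lemma sum_mul_comp_twist_eq (c : G) (w f : Perm G → ℤ) (hw : ∀ σ, w (twist c σ) = w σ) (d : G →₀ ℕ) :
    ∑ σ with cayleyDegree σ = d, w σ * f (twist c σ) = ∑ σ with cayleyDegree σ = d, w σ * f σ :=
  sum_equiv (twist c) (fun σ => by simp [cayleyDegree_twist]) fun σ _ => by rw [hw]

lemma card_mul_sum_mul_card_fixed (hmod : Nat.card G % 4 = 2) (w : Perm G → ℤ)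
    (hw : ∀ c σ, w (twist c σ) = w σ) (d : G →₀ ℕ) :
    Fintype.card G * ∑ σ with cayleyDegree σ = d, w σ * #{u | σ u = u} =
      2 * (∑ g with g ∈ doubles G, d g : ℕ) * ∑ σ with cayleyDegree σ = d, w σ := by
  calc Fintype.card G * ∑ σ with cayleyDegree σ = d, w σ * #{u | σ u = u}
      = ∑ c : G, ∑ σ with cayleyDegree σ = d, w σ * #{u | twist c σ u = u} := by
        simp [sum_mul_comp_twist_eq _ w (fun σ => (#{u | σ u = u} : ℤ)) (hw _)]
    _ = ∑ σ with cayleyDegree σ = d, w σ * ∑ c : G, #{u | twist c σ u = u} := by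
        rw [sum_comm]
        simp [mul_sum]
    _ = ∑ σ with cayleyDegree σ = d, w σ * (2 * (∑ g with g ∈ doubles G, d g : ℕ)) := by
        refine sum_congr rfl fun σ hσ => ?_
        rw [sum_card_fixed_twist hmod, ← (mem_filter.1 hσ).2, sum_doubles_cayleyDegree]
        push_cast
        ring
    _ = _ := by rw [← sum_mul, mul_comm]

lemma sum_mul_card_fixed_sub_one_eq_zero_iff (hmod : Nat.card G % 4 = 2) (w : Perm G → ℤ)
    (hw : ∀ c σ, w (twist c σ) = w σ) (d : G →₀ ℕ) :
    ∑ σ with cayleyDegree σ = d, w σ * (#{u | σ u = u} - 1) = 0 ↔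
      ∑ σ with cayleyDegree σ = d, w σ = 0 := by
  set F := ∑ σ with cayleyDegree σ = d, w σ * #{u | σ u = u}
  set B := ∑ σ with cayleyDegree σ = d, w σ
  set m := ∑ g with g ∈ doubles G, d g
  have hmod' : Fintype.card G % 4 = 2 := Nat.card_eq_fintype_card (α := G) ▸ hmod
  obtain ⟨h, hn, hh⟩ : ∃ h, Fintype.card G = 2 * h ∧ Odd h :=
    ⟨Fintype.card G / 2, by omega, Nat.odd_iff.2 (by omega)⟩
  have key : (h : ℤ) * F = m * B := by
    have := card_mul_sum_mul_card_fixed hmod w hw d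
    rw [hn, Nat.cast_mul, Nat.cast_two, mul_assoc, mul_assoc] at this
    exact mul_left_cancel₀ two_ne_zero this
  have hsub : ∑ σ with cayleyDegree σ = d, w σ * (#{u | σ u = u} - 1) = F - B := by
    simp only [mul_sub, mul_one, sum_sub_distrib, F, B]
  rw [hsub, sub_eq_zero]
  constructor
  · intro hFB
    by_contra hB
    rw [hFB] at key
    obtain ⟨σ, hσ, -⟩ := exists_ne_zero_of_sum_ne_zero hB
    have hm : Even m := by
      change Even (∑ g with g ∈ doubles G, d g)
      rw [← (mem_filter.1 hσ).2, sum_doubles_cayleyDegree]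
      exact even_card_add_mem_doubles hmod σ
    have : h = m := by exact_mod_cast mul_right_cancel₀ hB key
    exact Nat.not_even_iff_odd.2 hh (this ▸ hm)
  · intro hB
    rw [hB, mul_zero, mul_eq_zero] at key
    rw [hB, key.resolve_left (by exact_mod_cast hh.pos.ne')]

lemma coeff_sum_C_mul_prod_X (v : Perm G → ℤ) (d : G →₀ ℕ) :
    coeff d (∑ σ, C (v σ) * ∏ a, (X (a + σ a) : MvPolynomial G ℤ)) =
      ∑ σ with cayleyDegree σ = d, v σ := by
  simp only [coeff_sum, prod_X_add_eq_monomial, coeff_C_mul, coeff_monomial]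
  simp [sum_filter, eq_comm]

lemma support_sum_C_mul_card_fixed_sub_one (hmod : Nat.card G % 4 = 2) (w : Perm G → ℤ)
    (hw : ∀ c σ, w (twist c σ) = w σ) :
    (∑ σ, C (w σ * (#{u | σ u = u} - 1)) * ∏ a, (X (a + σ a) : MvPolynomial G ℤ)).support =
      (∑ σ, C (w σ) * ∏ a, (X (a + σ a) : MvPolynomial G ℤ)).support := by
  ext d
  simp only [mem_support_iff, coeff_sum_C_mul_prod_X]
  exact (sum_mul_card_fixed_sub_one_eq_zero_iff hmod w hw d).not

lemma det_cayleyTable :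
    (Matrix.of fun a b : G => (X (a + b) : MvPolynomial G ℤ)).det =
      ∑ σ, C (Perm.sign σ : ℤ) * ∏ a, X (a + σ a) := by
  simp [Matrix.det_apply', add_comm]

end Fintype

end CayleyImmanant

open CayleyImmanant in
/-- **Support equalities for `n ≡ 2 (mod 4)`.** If `|G| ≡ 2 (mod 4)`, then the monomial
support of `imm_{(n−1,1)}(M_G)` equals the support of `per(M_G)`, and the support of
`imm_{(2,1^{n−2})}(M_G)` equals the support of `det(M_G)`. -/
theorem stmt_12 {G : Type*} [AddCommGroup G] [Fintype G] [DecidableEq G]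
    (hmod : Fintype.card G % 4 = 2) :
    (∑ σ : Equiv.Perm G,
        (C (((Finset.univ.filter fun u : G => σ u = u).card : ℤ) - 1) : MvPolynomial G ℤ) *
          ∏ a : G, X (a + σ a)).support =
      (∑ σ : Equiv.Perm G, ∏ a : G, (X (a + σ a) : MvPolynomial G ℤ)).support ∧
    (∑ σ : Equiv.Perm G,
        (C ((Equiv.Perm.sign σ : ℤ) *
            (((Finset.univ.filter fun u : G => σ u = u).card : ℤ) - 1)) : MvPolynomial G ℤ) *
          ∏ a : G, X (a + σ a)).support =
      (Matrix.det (Matrix.of fun a b : G => (X (a + b) : MvPolynomial G ℤ))).support := by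
  rw [← Nat.card_eq_fintype_card] at hmod
  refine ⟨?_, ?_⟩
  · simpa using support_sum_C_mul_card_fixed_sub_one hmod 1 fun _ _ => rfl
  · rw [det_cayleyTable]
    exact support_sum_C_mul_card_fixed_sub_one hmod (fun σ => Equiv.Perm.sign σ) fun c σ => by
      rw [sign_twist]
end

section
/- Let R be a commutative ring, n ∈ ℕ, and A = (a_{ij}) an n×n matrix over R. Then ∑_{σ∈S_n} sgn(σ)·(c_1(σ)−1)·(1−2c_2(σ)) ∏_{i=1}^n a_{i,σ(i)} = F_1(A) − det(A) + 2(T_{12}(A) − T_2(A)). -/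
/-! Expanding `(c₁ - 1)(1 - 2c₂) = c₁ - 1 - 2c₁c₂ + 2c₂` splits the left-hand side into four
signed Leibniz sums, weighted by `c₁`, `1`, `c₁c₂` and `c₂`. Each weight counts patterns in `σ`
(fixed points `i`, transposed pairs `j < k`, and both at once), so exchanging the sums leaves,
for each pattern, the signed sum over the permutations extending a partial permutation `π`
on a set `S`. These are `π` composed with the permutations of the complement of `S`, so that
sum is `sgn π · ∏_{i ∈ S} a_{i,π(i)} · det A(S|S)`. -/

/-- Number of fixed points of a permutation, as an integer. -/
def permC1 {α : Type*} [Fintype α] [DecidableEq α] (σ : Equiv.Perm α) : ℤ :=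
  ((Finset.univ.filter fun u : α => σ u = u).card : ℤ)

/-- Number of `2`-cycles of a permutation, as an integer. -/
def permC2 {α : Type*} [Fintype α] [DecidableEq α] (σ : Equiv.Perm α) : ℤ :=
  (σ.cycleType.count 2 : ℤ)

/-- The principal minor `det A(S|S)` of `A` obtained by deleting the rows and the
columns indexed by `S`. -/
def pminor {n : ℕ} {R : Type*} [CommRing R] (A : Matrix (Fin n) (Fin n) R)
    (S : Finset (Fin n)) : R :=
  Matrix.det (A.submatrix (fun x : {a : Fin n // a ∉ S} => (x : Fin n))
    (fun x : {a : Fin n // a ∉ S} => (x : Fin n)))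

/-- `F₁(A) = ∑ᵢ aᵢᵢ · det A(i|i)`. -/
def F1 {n : ℕ} {R : Type*} [CommRing R] (A : Matrix (Fin n) (Fin n) R) : R :=
  ∑ i : Fin n, A i i * pminor A {i}

/-- `T₂(A) = ∑_{i<j} aᵢⱼaⱼᵢ · det A(i,j|i,j)`. -/
def T2 {n : ℕ} {R : Type*} [CommRing R] (A : Matrix (Fin n) (Fin n) R) : R :=
  ∑ p ∈ Finset.univ.filter (fun p : Fin n × Fin n => p.1 < p.2),
    A p.1 p.2 * A p.2 p.1 * pminor A {p.1, p.2}

/-- `T₁₂(A) = ∑_{i∉{j,k}, j<k} aᵢᵢaⱼₖaₖⱼ · det A(i,j,k|i,j,k)`. -/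
def T12 {n : ℕ} {R : Type*} [CommRing R] (A : Matrix (Fin n) (Fin n) R) : R :=
  ∑ t ∈ Finset.univ.filter
      (fun t : Fin n × Fin n × Fin n => t.1 ≠ t.2.1 ∧ t.1 ≠ t.2.2 ∧ t.2.1 < t.2.2),
    A t.1 t.1 * A t.2.1 t.2.2 * A t.2.2 t.2.1 * pminor A {t.1, t.2.1, t.2.2}

open Finset Equiv Equiv.Perm

section Counting

variable {α : Type*} [Fintype α] [DecidableEq α]

theorem Equiv.Perm.swap_mem_cycleFactorsFinset_iff {σ : Perm α} {x y : α} (hxy : x ≠ y) :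
    swap x y ∈ σ.cycleFactorsFinset ↔ σ x = y ∧ σ y = x := by
  rw [mem_cycleFactorsFinset_iff, support_swap hxy]
  simp [isCycle_swap hxy, or_imp, forall_and, eq_comm (a := σ _)]

theorem Equiv.Perm.cycleType_count_two [LinearOrder α] (σ : Perm α) :
    σ.cycleType.count 2 = #{p ∈ {p : α × α | p.1 < p.2} | σ p.1 = p.2 ∧ σ p.2 = p.1} := by
  rw [filter_filter, cycleType_def, Multiset.count_map, ← filter_val, ← card_def]
  symm
  refine card_bij (fun p _ => swap p.1 p.2) ?_ ?_ ?_
  · rintro ⟨x, y⟩ h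
    simp only [mem_filter_univ] at h
    simp [swap_mem_cycleFactorsFinset_iff h.1.ne, h, card_support_swap h.1.ne]
  · rintro ⟨x, y⟩ h ⟨x', y'⟩ h' hswap
    simp only [mem_filter_univ] at h h'
    have hx := congrArg (· x) hswap
    have hy := congrArg (· y) hswap
    simp only [swap_apply_left, swap_apply_right, swap_apply_def] at hx hy
    grind
  · intro c hc
    simp only [mem_filter] at hc
    obtain ⟨x, y, hxy, rfl⟩ := card_support_eq_two.mp hc.2.symm
    obtain ⟨hσx, hσy⟩ := (swap_mem_cycleFactorsFinset_iff hxy).mp hc.1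
    rcases hxy.lt_or_gt with hlt | hlt
    · exact ⟨(x, y), by simp [hlt, hσx, hσy], rfl⟩
    · exact ⟨(y, x), by simp [hlt, hσx, hσy], swap_comm y x⟩

end Counting

theorem permC1_mul_permC2 {α : Type*} [Fintype α] [LinearOrder α] (σ : Perm α) :
    permC1 σ * permC2 σ =
      #{t ∈ {t : α × α × α | t.1 ≠ t.2.1 ∧ t.1 ≠ t.2.2 ∧ t.2.1 < t.2.2} |
        σ t.1 = t.1 ∧ σ t.2.1 = t.2.2 ∧ σ t.2.2 = t.2.1} := by
  rw [filter_filter, permC1, permC2, cycleType_count_two, ← Nat.cast_mul, ← card_product]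
  congr 2
  ext ⟨i, j, k⟩
  simp only [mem_product, mem_filter_univ]
  grind

theorem sum_natCast_card_filter_mul {R α β : Type*} [CommSemiring R] [Fintype β]
    (s : Finset α) (P : α → β → Prop) [∀ a b, Decidable (P a b)] (f : β → R) :
    ∑ b, (#{a ∈ s | P a b} : R) * f b = ∑ a ∈ s, ∑ b with P a b, f b := by
  simp_rw [natCast_card_filter, sum_mul, ite_mul, one_mul, zero_mul, sum_filter]
  exact sum_comm

section Leibniz

variable {ι R : Type*} [Fintype ι] [DecidableEq ι] [CommRing R]

theorem Matrix.det_eq_sum_sign_mul_prod (A : Matrix ι ι R) :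
    A.det = ∑ σ : Perm ι, ((sign σ : ℤ) : R) * ∏ i, A i (σ i) := by
  rw [← Matrix.det_transpose, Matrix.det_apply']
  rfl

theorem prod_mul_ofSubtype_apply (A : Matrix ι ι R) (S : Finset ι) (π : Perm ι)
    (hπ : ∀ x ∉ S, π x = x) (τ : Perm {a // a ∉ S}) :
    ∏ i, A i ((π * ofSubtype τ) i) = (∏ i ∈ S, A i (π i)) * ∏ x : {a // a ∉ S}, A x (τ x) := by
  rw [← Fintype.prod_subtype_mul_prod_subtype (· ∉ S), mul_comm,
    prod_subtype S (p := fun i => ¬ i ∉ S) (by simp)]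
  congr 1
  · refine Fintype.prod_congr _ _ fun i => ?_
    rw [mul_apply, ofSubtype_apply_of_not_mem τ i.2]
  · refine Fintype.prod_congr _ _ fun x => ?_
    rw [mul_apply, ofSubtype_apply_coe, hπ _ (τ x).2]

theorem sum_sign_mul_prod_filter_eqOn (A : Matrix ι ι R) (S : Finset ι) (π : Perm ι)
    (hπ : ∀ x ∉ S, π x = x) :
    ∑ σ with ∀ i ∈ S, σ i = π i, ((sign σ : ℤ) : R) * ∏ i, A i (σ i) =
      ((sign π : ℤ) : R) * (∏ i ∈ S, A i (π i)) *
        (A.submatrix ((↑) : {a // a ∉ S} → ι) (↑)).det := by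
  set f : Perm ι → R := fun σ => ((sign σ : ℤ) : R) * ∏ i, A i (σ i)
  have hfix (τ : Perm ι) : (∀ a, ¬ a ∉ S → τ a = a) ↔ ∀ i ∈ S, (π * τ) i = π i := by
    simp [mul_apply]
  calc ∑ σ with ∀ i ∈ S, σ i = π i, f σ
      = ∑ τ : {τ : Perm ι // ∀ a, ¬ a ∉ S → τ a = a}, f (π * τ) := by
        rw [sum_subtype _ (fun σ => mem_filter_univ σ) f]
        exact (Fintype.sum_equiv ((Equiv.mulLeft π).subtypeEquiv hfix) _ _ fun _ => rfl).symm
    _ = ∑ τ : Perm {a // a ∉ S}, f (π * ofSubtype τ) :=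
        (Fintype.sum_equiv (Perm.subtypeEquivSubtypePerm _) _ _ fun _ => rfl).symm
    _ = _ := by
      rw [Matrix.det_eq_sum_sign_mul_prod, mul_sum]
      refine Fintype.sum_congr _ _ fun τ => ?_
      simp only [f, prod_mul_ofSubtype_apply A S π hπ, map_mul, sign_ofSubtype, Units.val_mul,
        Int.cast_mul, Matrix.submatrix_apply]
      ring

end Leibniz

section PrincipalMinors

variable {n : ℕ} {R : Type*} [CommRing R] (A : Matrix (Fin n) (Fin n) R)

theorem sum_sign_mul_prod_filter_fixed (i : Fin n) :
    ∑ σ with σ i = i, ((sign σ : ℤ) : R) * ∏ k, A k (σ k) = A i i * pminor A {i} := by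
  have h := sum_sign_mul_prod_filter_eqOn A {i} 1 fun _ _ => rfl
  simp only [mem_singleton, forall_eq, prod_singleton, one_apply] at h
  simp [h, pminor]

theorem sum_sign_mul_prod_filter_swap {i j : Fin n} (hij : i ≠ j) :
    ∑ σ with σ i = j ∧ σ j = i, ((sign σ : ℤ) : R) * ∏ k, A k (σ k) =
      -(A i j * A j i * pminor A {i, j}) := by
  have h := sum_sign_mul_prod_filter_eqOn A {i, j} (swap i j) fun x hx => by
    simp only [mem_insert, mem_singleton, not_or] at hx
    exact swap_apply_of_ne_of_ne hx.1 hx.2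
  simp only [forall_mem_insert, forall_eq, mem_singleton, prod_pair hij, swap_apply_left,
    swap_apply_right, sign_swap hij] at h
  simp [h, pminor]

theorem sum_sign_mul_prod_filter_fixed_swap {i j k : Fin n} (hij : i ≠ j) (hik : i ≠ k)
    (hjk : j ≠ k) :
    ∑ σ with σ i = i ∧ σ j = k ∧ σ k = j, ((sign σ : ℤ) : R) * ∏ m, A m (σ m) =
      -(A i i * A j k * A k j * pminor A {i, j, k}) := by
  have hswap_i : swap j k i = i := swap_apply_of_ne_of_ne hij hik
  have h := sum_sign_mul_prod_filter_eqOn A {i, j, k} (swap j k) fun x hx => by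
    simp only [mem_insert, mem_singleton, not_or] at hx
    exact swap_apply_of_ne_of_ne hx.2.1 hx.2.2
  have hi_notMem : i ∉ ({j, k} : Finset (Fin n)) := by simp [hij, hik]
  simp only [forall_mem_insert, forall_eq, mem_singleton, prod_insert hi_notMem,
    prod_pair hjk, hswap_i, swap_apply_left, swap_apply_right, sign_swap hjk] at h
  simp [h, pminor, mul_assoc]

end PrincipalMinors

section Expansion

variable {n : ℕ} {R : Type*} [CommRing R] (A : Matrix (Fin n) (Fin n) R)

theorem sum_permC1_mul_sign_mul_prod :
    ∑ σ : Perm (Fin n), (permC1 σ : R) * (((sign σ : ℤ) : R) * ∏ i, A i (σ i)) = F1 A := by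
  simp only [permC1, Int.cast_natCast]
  rw [sum_natCast_card_filter_mul univ fun i (σ : Perm (Fin n)) => σ i = i]
  exact sum_congr rfl fun i _ => sum_sign_mul_prod_filter_fixed A i

theorem sum_permC2_mul_sign_mul_prod :
    ∑ σ : Perm (Fin n), (permC2 σ : R) * (((sign σ : ℤ) : R) * ∏ i, A i (σ i)) = -T2 A := by
  simp only [permC2, cycleType_count_two, Int.cast_natCast]
  rw [sum_natCast_card_filter_mul _ fun (p : Fin n × Fin n) (σ : Perm (Fin n)) =>
    σ p.1 = p.2 ∧ σ p.2 = p.1, T2, ← sum_neg_distrib]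
  exact sum_congr rfl fun p hp => sum_sign_mul_prod_filter_swap A (mem_filter.1 hp).2.ne

theorem sum_permC1_mul_permC2_mul_sign_mul_prod :
    ∑ σ : Perm (Fin n), ((permC1 σ * permC2 σ : ℤ) : R) * (((sign σ : ℤ) : R) * ∏ i, A i (σ i)) =
      -T12 A := by
  simp only [permC1_mul_permC2, Int.cast_natCast]
  rw [sum_natCast_card_filter_mul _ fun (t : Fin n × Fin n × Fin n) (σ : Perm (Fin n)) =>
    σ t.1 = t.1 ∧ σ t.2.1 = t.2.2 ∧ σ t.2.2 = t.2.1, T12, ← sum_neg_distrib]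
  refine sum_congr rfl fun t ht => ?_
  obtain ⟨hij, hik, hjk⟩ := (mem_filter.1 ht).2
  exact sum_sign_mul_prod_filter_fixed_swap A hij hik hjk.ne

end Expansion

/-- **Principal-minor reduction.** For every `n × n` matrix `A` over a commutative ring,
`∑_σ sgn(σ)(c₁(σ)−1)(1−2c₂(σ)) ∏ᵢ a_{i,σ(i)} = F₁(A) − det A + 2(T₁₂(A) − T₂(A))`. -/
theorem stmt_14 {n : ℕ} {R : Type*} [CommRing R] (A : Matrix (Fin n) (Fin n) R) :
    (∑ σ : Equiv.Perm (Fin n),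
        (((Equiv.Perm.sign σ : ℤ) * (permC1 σ - 1) * (1 - 2 * permC2 σ) : ℤ) : R) *
          ∏ i : Fin n, A i (σ i)) =
      F1 A - Matrix.det A + 2 * (T12 A - T2 A) := by
  have hweight (σ : Perm (Fin n)) :
      (((sign σ : ℤ) * (permC1 σ - 1) * (1 - 2 * permC2 σ) : ℤ) : R) * ∏ i, A i (σ i) =
        (permC1 σ : R) * (((sign σ : ℤ) : R) * ∏ i, A i (σ i)) -
          ((sign σ : ℤ) : R) * ∏ i, A i (σ i) -
          2 * (((permC1 σ * permC2 σ : ℤ) : R) * (((sign σ : ℤ) : R) * ∏ i, A i (σ i))) +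
          2 * ((permC2 σ : R) * (((sign σ : ℤ) : R) * ∏ i, A i (σ i))) := by
    push_cast
    ring
  simp only [hweight, sum_add_distrib, sum_sub_distrib, ← mul_sum, ← A.det_eq_sum_sign_mul_prod,
    sum_permC1_mul_sign_mul_prod, sum_permC2_mul_sign_mul_prod,
    sum_permC1_mul_permC2_mul_sign_mul_prod]
  ring
end

section
/- Let n ≥ 6 be even and let G = ℤ/nℤ. Then the coefficient of the monomial x_0^n in the polynomial ∑_{σ∈Sym(G)} sgn(σ)·(c_1(σ)−1)·(1−2c_2(σ)) ∏_{a∈G} x_{a+σ(a)} equals (3−n)·(−1)^{(n−2)/2}. In particular this polynomial, which equals imm_{(4,1^{n−4})}(M_G) − imm_{(2,2,2,1^{n−6})}(M_G), is nonzero. -/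
open MvPolynomial

lemma aux_prod_X_eq {α σR : Type*} [DecidableEq σR] (s : Finset α) (f : α → σR) :
    (∏ a ∈ s, X (f a) : MvPolynomial σR ℤ) =
      monomial (∑ a ∈ s, Finsupp.single (f a) 1) 1 := by
  classical
  induction s using Finset.cons_induction with
  | empty => simp
  | cons a s ha ih =>
      rw [Finset.prod_cons, Finset.sum_cons, ih, X, monomial_mul, one_mul]

lemma aux_sum_single_eq {n : ℕ} [NeZero n] (f : ZMod n → ZMod n) :
    (∑ a : ZMod n, Finsupp.single (f a) 1) = Finsupp.single (0 : ZMod n) n ↔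
      ∀ a, f a = 0 := by
  constructor
  · intro h
    have h0 := DFunLike.congr_fun h (0 : ZMod n)
    simp only [Finsupp.finset_sum_apply, Finsupp.single_apply, if_true, eq_self_iff_true] at h0
    rw [Finset.sum_boole] at h0
    have hcard : (Finset.univ.filter fun x : ZMod n => f x = 0) = Finset.univ := by
      apply Finset.eq_univ_of_card
      exact_mod_cast h0.trans (ZMod.card n).symm
    intro a
    have := Finset.mem_filter.mp (hcard ▸ Finset.mem_univ a)
    exact this.2
  · intro h
    simp only [h]
    rw [Finset.sum_const, Finset.card_univ, ZMod.card]
    simp [Finsupp.smul_single]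

lemma aux_fixed_neg {n : ℕ} [NeZero n] (hn : 6 ≤ n) (heven : Even n) :
    (Finset.univ.filter fun u : ZMod n => (Equiv.neg (ZMod n)) u = u).card = 2 := by
  have hn0 : 0 < n := Nat.pos_of_ne_zero (NeZero.ne n)
  have h2 : (2 : ℕ) ∣ n := heven.two_dvd
  have hhalf : ((n / 2 : ℕ) : ZMod n) ≠ 0 := by
    rw [Ne, ZMod.natCast_eq_zero_iff]
    intro hdvd
    have : n / 2 ≠ 0 := by omega
    have := Nat.le_of_dvd (by omega) hdvd
    omega
  have hset : (Finset.univ.filter fun u : ZMod n => (Equiv.neg (ZMod n)) u = u)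
      = {(0 : ZMod n), ((n / 2 : ℕ) : ZMod n)} := by
    ext a
    simp only [Finset.mem_filter, Finset.mem_univ, true_and, Equiv.neg_apply,
      Finset.mem_insert, Finset.mem_singleton, ZMod.neg_eq_self_iff]
    constructor
    · rintro (rfl | h)
      · exact Or.inl rfl
      · right
        have hval : a.val = n / 2 := by omega
        rw [← hval, ZMod.natCast_val, ZMod.cast_id]
    · rintro (rfl | rfl)
      · exact Or.inl rfl
      · right
        rw [ZMod.val_natCast]
        rw [Nat.mod_eq_of_lt (by omega)]
        omega
  rw [hset]
  rw [Finset.card_insert_of_notMem (by simpa using hhalf.symm), Finset.card_singleton]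

lemma aux_negPerm_sq {n : ℕ} : (Equiv.neg (ZMod n) : Equiv.Perm (ZMod n)) ^ 2 = 1 := by
  ext a
  simp [sq, Equiv.Perm.mul_apply]

lemma aux_cycleType_neg {n : ℕ} [NeZero n]
    (hfix : (Finset.univ.filter fun u : ZMod n => (Equiv.neg (ZMod n)) u = u).card = 2) :
    (Equiv.neg (ZMod n) : Equiv.Perm (ZMod n)).cycleType
      = Multiset.replicate ((n - 2) / 2) 2 := by
  set σ := (Equiv.neg (ZMod n) : Equiv.Perm (ZMod n))
  have hall : ∀ k ∈ σ.cycleType, k = 2 := by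
    intro k hk
    have h2le := Equiv.Perm.two_le_of_mem_cycleType hk
    have hdvd : k ∣ orderOf σ := by
      rw [← Equiv.Perm.lcm_cycleType]
      exact Multiset.dvd_lcm hk
    have ho : orderOf σ ∣ 2 := orderOf_dvd_of_pow_eq_one aux_negPerm_sq
    have := Nat.le_of_dvd (by norm_num) (hdvd.trans ho)
    omega
  have hsupp : σ.support.card = n - 2 := by
    have := Finset.card_filter_add_card_filter_not
      (s := (Finset.univ : Finset (ZMod n))) (p := fun u : ZMod n => σ u = u)
    rw [Finset.card_univ, ZMod.card] at this
    have hs : σ.support = Finset.univ.filter fun u : ZMod n => ¬ σ u = u := by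
      ext a; simp [Equiv.Perm.mem_support]
    rw [hs]
    omega
  have hsum : σ.cycleType.sum = n - 2 := by rw [Equiv.Perm.sum_cycleType, hsupp]
  have hcard : Multiset.card σ.cycleType = (n - 2) / 2 := by
    have h2 : σ.cycleType.sum = 2 * Multiset.card σ.cycleType := by
      calc σ.cycleType.sum = (σ.cycleType.map (fun _ => 2)).sum :=
            congrArg Multiset.sum (Multiset.map_congr rfl hall).symm ▸ by
              rw [Multiset.map_id']
      _ = 2 * Multiset.card σ.cycleType := by
            rw [Multiset.map_const', Multiset.sum_replicate, smul_eq_mul, mul_comm]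
    omega
  rw [Multiset.eq_replicate]
  exact ⟨hcard, hall⟩

/-- **Even cyclic groups: the twin immanants differ.** For `G = ℤ/nℤ` with `n ≥ 6` even,
the coefficient of `x₀ⁿ` in `∑_σ sgn(σ)(c₁(σ)−1)(1−2c₂(σ)) ∏_a x_{a+σ(a)}` equals
`(3−n)·(−1)^{(n−2)/2}`; in particular this polynomial
(which is `imm_{(4,1^{n−4})}(M_G) − imm_{(2,2,2,1^{n−6})}(M_G)`) is nonzero. -/
theorem stmt_17 (n : ℕ) [NeZero n] (hn : 6 ≤ n) (heven : Even n) :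
    MvPolynomial.coeff (Finsupp.single (0 : ZMod n) n)
        (∑ σ : Equiv.Perm (ZMod n),
          (C ((Equiv.Perm.sign σ : ℤ) * (permC1 σ - 1) * (1 - 2 * permC2 σ)) :
              MvPolynomial (ZMod n) ℤ) *
            ∏ a : ZMod n, X (a + σ a)) =
      ((3 : ℤ) - n) * (-1) ^ ((n - 2) / 2) ∧
    (∑ σ : Equiv.Perm (ZMod n),
        (C ((Equiv.Perm.sign σ : ℤ) * (permC1 σ - 1) * (1 - 2 * permC2 σ)) :
            MvPolynomial (ZMod n) ℤ) *
          ∏ a : ZMod n, X (a + σ a)) ≠ 0 := by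
  classical
  have h2dvd : (2 : ℕ) ∣ n - 2 := by
    obtain ⟨k, hk⟩ := heven; omega
  set σ₀ : Equiv.Perm (ZMod n) := Equiv.neg (ZMod n) with hσ₀
  have hfix := aux_fixed_neg hn heven
  have hct := aux_cycleType_neg (n := n) hfix
  -- coefficient of each product of X's
  have hcoeff : ∀ σ : Equiv.Perm (ZMod n),
      MvPolynomial.coeff (Finsupp.single (0 : ZMod n) n)
        (∏ a : ZMod n, X (a + σ a) : MvPolynomial (ZMod n) ℤ)
        = if σ = σ₀ then 1 else 0 := by
    intro σ
    rw [aux_prod_X_eq, coeff_monomial]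
    congr 1
    rw [eq_iff_iff, aux_sum_single_eq (fun a => a + σ a)]
    constructor
    · intro h
      ext a
      have := h a
      simp only [hσ₀, Equiv.neg_apply]
      linear_combination (norm := abel) this
    · intro h a
      rw [h]
      simp [hσ₀]
  -- reduce the big sum to the single permutation σ₀
  have hmain : MvPolynomial.coeff (Finsupp.single (0 : ZMod n) n)
        (∑ σ : Equiv.Perm (ZMod n),
          (C ((Equiv.Perm.sign σ : ℤ) * (permC1 σ - 1) * (1 - 2 * permC2 σ)) :
              MvPolynomial (ZMod n) ℤ) * ∏ a : ZMod n, X (a + σ a))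
      = (Equiv.Perm.sign σ₀ : ℤ) * (permC1 σ₀ - 1) * (1 - 2 * permC2 σ₀) := by
    rw [MvPolynomial.coeff_sum]
    simp only [coeff_C_mul, hcoeff, mul_ite, mul_one, mul_zero]
    rw [Finset.sum_ite_eq' Finset.univ σ₀]
    simp
  -- compute the three quantities for σ₀
  have hc1 : permC1 σ₀ = 2 := by
    rw [permC1, hσ₀, hfix]; norm_num
  have hc2 : permC2 σ₀ = ((n - 2) / 2 : ℕ) := by
    rw [permC2, hσ₀, hct, Multiset.count_replicate]
    simp
  have hsign : (Equiv.Perm.sign σ₀ : ℤ) = (-1 : ℤ) ^ ((n - 2) / 2) := by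
    rw [hσ₀]
    have := Equiv.Perm.sign_of_cycleType (Equiv.neg (ZMod n) : Equiv.Perm (ZMod n))
    rw [hct] at this
    rw [this]
    rw [Multiset.sum_replicate, Multiset.card_replicate, smul_eq_mul]
    push_cast
    rw [pow_add, mul_comm ((n - 2) / 2) 2, pow_mul]
    norm_num
  have hval : (1 : ℤ) - 2 * permC2 σ₀ = 3 - n := by
    rw [hc2]
    have h := Nat.div_mul_cancel h2dvd
    omega
  constructor
  · rw [hmain, hc1, hval, hsign]
    ring
  · intro hzero
    rw [hzero] at hmain
    rw [hc1, hval, hsign] at hmain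
    simp only [MvPolynomial.coeff_zero] at hmain
    have hne : ((3 : ℤ) - n) ≠ 0 := by
      have : (6 : ℤ) ≤ n := by exact_mod_cast hn
      omega
    have := mul_ne_zero (mul_ne_zero (pow_ne_zero ((n-2)/2) (by norm_num : (-1:ℤ) ≠ 0)) (by norm_num : (2:ℤ) - 1 ≠ 0)) hne
    exact this hmain.symm
end

section
/- Let p be a prime, r ≥ 1, and let M < p^r be a natural number. For any k ≥ 1 and m_1,…,m_k ∈ ℕ with m_1 + ⋯ + m_k = M, the p-adic valuation of the multinomial coefficient M!/(m_1!⋯m_k!) is at most (k−1)(r−1). -/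
lemma choose_val_le (p r : ℕ) (hp : p.Prime) (hr : 1 ≤ r) {n k : ℕ} (hn : n < p ^ r) :
    padicValNat p (n.choose k) ≤ r - 1 := by
  have := @Nat.factorization_choose_le_log p n k
  rw [Nat.factorization_def _ hp] at this
  refine this.trans ?_
  rcases Nat.eq_zero_or_pos n with h0 | h0
  · simp [h0]
  · have : Nat.log p n < r := Nat.log_lt_of_lt_pow h0.ne' hn
    omega

lemma multinomial_val_le (p r : ℕ) (hp : p.Prime) (hr : 1 ≤ r) {k : ℕ} (m : Fin k → ℕ)
    (s : Finset (Fin k)) (hs : ∑ i ∈ s, m i < p ^ r) :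
    padicValNat p (Nat.multinomial s m) ≤ (s.card - 1) * (r - 1) := by
  classical
  induction s using Finset.induction with
  | empty => simp
  | @insert a s ha ih =>
    rename ∑ i ∈ _, m i < p ^ r => hsum
    rw [Nat.multinomial_insert ha]
    have hsle : ∑ i ∈ s, m i ≤ ∑ i ∈ insert a s, m i := by
      rw [Finset.sum_insert ha]; omega
    have hsum' : ∑ i ∈ s, m i < p ^ r := lt_of_le_of_lt hsle hsum
    have h1 : padicValNat p ((m a + ∑ i ∈ s, m i).choose (m a)) ≤ r - 1 := by
      refine choose_val_le p r hp hr ?_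
      rw [Finset.sum_insert ha] at hsum
      exact hsum
    have hc : (m a + ∑ i ∈ s, m i).choose (m a) ≠ 0 :=
      (Nat.choose_pos (Nat.le_add_right _ _)).ne'
    have hmne : Nat.multinomial s m ≠ 0 := (Nat.multinomial_pos s m).ne'
    haveI := Fact.mk hp
    rw [padicValNat.mul hc hmne]
    rcases Finset.eq_empty_or_nonempty s with rfl | hne
    · simp only [Finset.sum_empty, Nat.add_zero, Nat.choose_self, Nat.multinomial_empty]
      simpa using le_refl 0
    · have hcard : 1 ≤ s.card := Finset.card_pos.mpr hne
      have hih := ih hsum'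
      rw [Finset.card_insert_of_notMem ha]
      calc padicValNat p ((m a + ∑ i ∈ s, m i).choose (m a)) + padicValNat p (Nat.multinomial s m)
          ≤ (r - 1) + (s.card - 1) * (r - 1) := add_le_add h1 hih
        _ = (1 + (s.card - 1)) * (r - 1) := by ring
        _ = (s.card + 1 - 1) * (r - 1) := by congr 1; omega

/-- **Multinomial valuation bound.** If `p` is prime, `r ≥ 1`, `M < p ^ r`, and
`m₁ + ⋯ + m_k = M` with `k ≥ 1`, then the `p`-adic valuation of the multinomial
coefficient `M! / (m₁! ⋯ m_k!)` is at most `(k−1)(r−1)`. -/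
theorem stmt_19 (p r : ℕ) (hp : p.Prime) (hr : 1 ≤ r) (M : ℕ) (hM : M < p ^ r)
    (k : ℕ) (hk : 1 ≤ k) (m : Fin k → ℕ) (hm : ∑ j, m j = M) :
    padicValNat p (Nat.factorial M / ∏ j, Nat.factorial (m j)) ≤ (k - 1) * (r - 1) := by
  have h := multinomial_val_le p r hp hr m Finset.univ (by rw [hm]; exact hM)
  rw [Nat.multinomial, hm] at h
  simpa using h
end
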